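/- arXiv:1511.09153 — 4 statements merged into one kernel-verified Lean document; each statement's English description precedes it below -/
import Mathlib

section
/- Let λ > 0 and z ∈ ℝ^J with ‖z‖₁ ≤ λ. Then the zero vector is a minimizer (indeed the unique minimizer) of the function v ↦ λ‖v‖_∞ + (1/2)‖v − z‖₂² on ℝ^J. -/
/-!
Expanding the square, `f v - f 0 = λ‖v‖_∞ - ⟪v, z⟫ + ½‖v‖₂²`, and Hölder's inequality for the
dual pair `ℓ_∞`, `ℓ₁` gives `⟪v, z⟫ ≤ ‖v‖_∞ ‖z‖₁ ≤ λ‖v‖_∞`. Hence `f v ≥ f 0 + ½‖v‖₂²`, which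
makes `0` a minimizer and forces every minimizer to vanish.
-/

open Finset

section SupNorm

variable {ι : Type*}

lemma abs_le_iSup_abs [Finite ι] (v : ι → ℝ) (i : ι) : |v i| ≤ ⨆ j, |v j| :=
  le_ciSup (Set.finite_range fun j => |v j|).bddAbove i

lemma iSup_abs_nonneg (v : ι → ℝ) : 0 ≤ ⨆ i, |v i| :=
  Real.iSup_nonneg fun _ => abs_nonneg _

variable [Fintype ι]

lemma sum_mul_le_iSup_abs_mul_sum_abs (v z : ι → ℝ) :
    ∑ i, v i * z i ≤ (⨆ i, |v i|) * ∑ i, |z i| := by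
  rw [mul_sum]
  refine sum_le_sum fun i _ => ?_
  calc v i * z i ≤ |v i| * |z i| := (le_abs_self _).trans_eq (abs_mul _ _)
    _ ≤ (⨆ j, |v j|) * |z i| := by gcongr; exact abs_le_iSup_abs v i

theorem half_sum_sq_add_half_sum_sq_le_of_sum_abs_le {lam : ℝ} {z : ι → ℝ}
    (hz : ∑ i, |z i| ≤ lam) (v : ι → ℝ) :
    (1 / 2) * ∑ i, z i ^ 2 + (1 / 2) * ∑ i, v i ^ 2 ≤
      lam * (⨆ i, |v i|) + (1 / 2) * ∑ i, (v i - z i) ^ 2 := by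
  have hdot : ∑ i, v i * z i ≤ lam * ⨆ i, |v i| :=
    calc ∑ i, v i * z i ≤ (⨆ i, |v i|) * ∑ i, |z i| := sum_mul_le_iSup_abs_mul_sum_abs v z
      _ ≤ (⨆ i, |v i|) * lam := by gcongr; exact iSup_abs_nonneg v
      _ = lam * ⨆ i, |v i| := mul_comm _ _
  have hexp : ∑ i, (v i - z i) ^ 2 = ∑ i, v i ^ 2 - 2 * ∑ i, v i * z i + ∑ i, z i ^ 2 := by
    simp only [sub_sq, sum_add_distrib, sum_sub_distrib, mul_sum, mul_assoc]
  linarith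

end SupNorm

theorem stmt_3_general (J : ℕ) (lam : ℝ) (z : Fin J → ℝ)
    (hz : ∑ i, |z i| ≤ lam) :
    let f : (Fin J → ℝ) → ℝ :=
      fun v => lam * (⨆ i, |v i|) + (1 / 2) * ∑ i, (v i - z i) ^ 2
    (∀ v, f 0 ≤ f v) ∧ (∀ v, (∀ u, f v ≤ f u) → v = 0) := by
  intro f
  have hf0 : f 0 = (1 / 2) * ∑ i, z i ^ 2 := by simp [f]
  have growth (v : Fin J → ℝ) : f 0 + (1 / 2) * ∑ i, v i ^ 2 ≤ f v :=
    hf0 ▸ half_sum_sq_add_half_sum_sq_le_of_sum_abs_le hz v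
  have hsq (v : Fin J → ℝ) : 0 ≤ ∑ i, v i ^ 2 := sum_nonneg fun i _ => sq_nonneg _
  refine ⟨fun v => by linarith [growth v, hsq v], fun v hv => ?_⟩
  have hsum : ∑ i, v i ^ 2 = 0 := by linarith [growth v, hsq v, hv 0]
  have hsq_zero := (Fintype.sum_eq_zero_iff_of_nonneg fun i => sq_nonneg (v i)).1 hsum
  exact funext fun i => pow_eq_zero_iff two_ne_zero |>.1 (congrFun hsq_zero i)

/-- Proximal problem of the sup-norm regularizer, first branch of Algorithm 2: if
`λ > 0` and `‖z‖₁ ≤ λ`, then `0` is the (unique) minimizer of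
`v ↦ λ‖v‖_∞ + (1/2)‖v − z‖₂²` on `ℝ^J`. -/
theorem stmt_3 (J : ℕ) (lam : ℝ) (hlam : 0 < lam) (z : Fin J → ℝ)
    (hz : ∑ i, |z i| ≤ lam) :
    let f : (Fin J → ℝ) → ℝ :=
      fun v => lam * (⨆ i, |v i|) + (1 / 2) * ∑ i, (v i - z i) ^ 2
    (∀ v, f 0 ≤ f v) ∧ (∀ v, (∀ u, f v ≤ f u) → v = 0) :=
  stmt_3_general J lam z hz
end

section
/- Let λ > 0 and z ∈ ℝ^J with ‖z‖₁ > λ. Let u ∈ ℝ^J be the vector of absolute values |z_i| sorted in decreasing order u₁ ≥ u₂ ≥ ⋯ ≥ u_J, let r̂ = max{ r ∈ {1,…,J} : λ − Σ_{t=1}^{r}(u_t − u_r) > 0 }, and let τ = (Σ_{t=1}^{r̂} u_t − λ)/r̂. Then the unique minimizer v* of the function v ↦ λ‖v‖_∞ + (1/2)‖v − z‖₂² on ℝ^J is given componentwise by v*_i = sign(z_i)·min(|z_i|, τ) for every i. -/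
lemma sign_abs_le' (x : ℝ) : |Real.sign x| ≤ 1 := by
  rcases lt_trichotomy x 0 with h | h | h
  · rw [Real.sign_of_neg h]; norm_num
  · rw [h, Real.sign_zero]; norm_num
  · rw [Real.sign_of_pos h]; norm_num

lemma sign_mul_abs' (x : ℝ) : Real.sign x * |x| = x := by
  rcases lt_trichotomy x 0 with h | h | h
  · rw [Real.sign_of_neg h, abs_of_neg h]; ring
  · simp [h]
  · rw [Real.sign_of_pos h, abs_of_pos h]; ring

lemma sign_sq' (x : ℝ) (hx : x ≠ 0) : Real.sign x * Real.sign x = 1 := by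
  rcases lt_trichotomy x 0 with h | h | h
  · rw [Real.sign_of_neg h]; norm_num
  · exact absurd h hx
  · rw [Real.sign_of_pos h]; norm_num

/-- Proximal problem of the sup-norm regularizer, second branch of Algorithm 2: for
`λ > 0` and `‖z‖₁ > λ`, let `u` be the absolute values `|z_i|` sorted in decreasing
order, let `r̂` be the largest `r` with `λ − Σ_{t=1}^{r}(u_t − u_r) > 0` (here indexed
zero-based: `rhat : Fin J` corresponds to `r̂ = rhat + 1`), and let
`τ = (Σ_{t=1}^{r̂} u_t − λ)/r̂`.  Then the unique minimizer of
`v ↦ λ‖v‖_∞ + (1/2)‖v − z‖₂²` is `v*_i = sign(z_i)·min(|z_i|, τ)`. -/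
theorem stmt_4 (J : ℕ) (lam : ℝ) (hlam : 0 < lam) (z : Fin J → ℝ)
    (hz : lam < ∑ i, |z i|)
    (u : Fin J → ℝ) (hu_sorted : Antitone u)
    (hu_perm : ∃ σ : Equiv.Perm (Fin J), ∀ i, u i = |z (σ i)|)
    (rhat : Fin J)
    (hrhat : 0 < lam - ∑ t ∈ Finset.Iic rhat, (u t - u rhat))
    (hrmax : ∀ r : Fin J, 0 < lam - ∑ t ∈ Finset.Iic r, (u t - u r) → r ≤ rhat)
    (τ : ℝ)
    (hτ : τ = ((∑ t ∈ Finset.Iic rhat, u t) - lam) / (((rhat : ℕ) : ℝ) + 1)) :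
    let f : (Fin J → ℝ) → ℝ :=
      fun v => lam * (⨆ i, |v i|) + (1 / 2) * ∑ i, (v i - z i) ^ 2
    let vstar : Fin J → ℝ := fun i => Real.sign (z i) * min |z i| τ
    (∀ v, f vstar ≤ f v) ∧ (∀ v, (∀ w, f v ≤ f w) → v = vstar) := by
  obtain ⟨σ, hσ⟩ := hu_perm
  have hJ : 0 < J := rhat.pos
  haveI : Nonempty (Fin J) := ⟨rhat⟩
  intro f vstar
  -- τ characterization
  have hτ_eq : ((rhat : ℕ) + 1 : ℝ) * τ = (∑ t ∈ Finset.Iic rhat, u t) - lam := by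
    rw [hτ]; field_simp
  have hsum_sub : ∀ r : Fin J, ∑ t ∈ Finset.Iic r, (u t - u r)
      = (∑ t ∈ Finset.Iic r, u t) - ((r : ℕ) + 1 : ℝ) * u r := by
    intro r
    rw [Finset.sum_sub_distrib, Finset.sum_const, nsmul_eq_mul, Fin.card_Iic]
    push_cast; ring
  -- τ < u rhat
  have hurτ : τ < u rhat := by
    rw [hsum_sub] at hrhat
    have h1 : (0:ℝ) < (rhat : ℕ) + 1 := by positivity
    nlinarith [hrhat, hτ_eq]
  -- u t ≤ τ for rhat < t
  have hgt : ∀ t : Fin J, rhat < t → u t ≤ τ := by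
    intro t ht
    have h1 : (rhat : ℕ) + 1 ≤ (t : ℕ) := ht
    set r' : Fin J := ⟨(rhat : ℕ) + 1, lt_of_le_of_lt h1 t.isLt⟩ with hr'
    have hr'le : r' ≤ t := h1
    have hne : ¬ (0 < lam - ∑ s ∈ Finset.Iic r', (u s - u r')) := by
      intro hp
      have h2 : (r' : ℕ) ≤ (rhat : ℕ) := hrmax r' hp
      simp only [hr'] at h2
      omega
    push_neg at hne
    have hIic : Finset.Iic r' = insert r' (Finset.Iic rhat) := by
      ext s
      simp only [Finset.mem_Iic, Finset.mem_insert, Fin.le_def, Fin.ext_iff, hr']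
      omega
    have hnotmem : r' ∉ Finset.Iic rhat := by
      simp only [Finset.mem_Iic, Fin.le_def, hr']
      omega
    rw [hsum_sub, hIic, Finset.sum_insert hnotmem] at hne
    have hc : ((r' : ℕ) : ℝ) = ((rhat : ℕ) : ℝ) + 1 := by
      simp only [hr']; push_cast; ring
    have hpos : (0:ℝ) < ((rhat : ℕ) : ℝ) + 1 := by positivity
    rw [hc] at hne
    have hmul : (((rhat : ℕ) : ℝ) + 1) * u r' ≤ (((rhat : ℕ) : ℝ) + 1) * τ := by
      nlinarith [hne, hτ_eq]
    have hru : u r' ≤ τ := le_of_mul_le_mul_left hmul hpos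
    exact le_trans (hu_sorted hr'le) hru
  -- u nonneg
  have hu_nonneg : ∀ i, 0 ≤ u i := fun i => (hσ i) ▸ abs_nonneg _
  -- key identity for u
  have hkey_u : ∑ i, max (u i - τ) 0 = lam := by
    rw [← Finset.sum_add_sum_compl (Finset.Iic rhat)]
    have h1 : ∑ i ∈ Finset.Iic rhat, max (u i - τ) 0
        = ∑ i ∈ Finset.Iic rhat, (u i - τ) := by
      apply Finset.sum_congr rfl
      intro i hi
      have : u rhat ≤ u i := hu_sorted (Finset.mem_Iic.mp hi)
      rw [max_eq_left (by linarith)]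
    have h2 : ∑ i ∈ (Finset.Iic rhat)ᶜ, max (u i - τ) 0 = 0 := by
      apply Finset.sum_eq_zero
      intro i hi
      have hgt' : rhat < i := by
        simp only [Finset.mem_compl, Finset.mem_Iic] at hi
        exact lt_of_not_ge hi
      rw [max_eq_right (by linarith [hgt i hgt'])]
    rw [h1, h2, Finset.sum_sub_distrib, Finset.sum_const, nsmul_eq_mul, Fin.card_Iic]
    push_cast
    linarith [hτ_eq]
  have hkey : ∑ i, max (|z i| - τ) 0 = lam := by
    rw [← hkey_u]
    rw [show (∑ i, max (|z i| - τ) 0) = ∑ i, max (|z (σ i)| - τ) 0 from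
      (Equiv.sum_comp σ fun i => max (|z i| - τ) 0).symm]
    exact (Finset.sum_congr rfl fun i _ => by rw [hσ i]).symm
  -- τ > 0
  have hτpos : 0 < τ := by
    by_contra h
    push_neg at h
    have h1 : ∀ i ∈ Finset.univ, |z i| ≤ max (|z i| - τ) 0 := by
      intro i _
      calc |z i| ≤ |z i| - τ := by linarith
      _ ≤ max (|z i| - τ) 0 := le_max_left _ _
    have := Finset.sum_le_sum h1
    rw [hkey] at this
    linarith
  -- the subgradient g
  set g : Fin J → ℝ := fun i => Real.sign (z i) * max (|z i| - τ) 0 with hg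
  have hg_eq : ∀ i, g i = z i - vstar i := by
    intro i
    simp only [hg, vstar]
    rcases eq_or_ne (z i) 0 with h | h
    · simp [h]
    · have hs : Real.sign (z i) * |z i| = z i := sign_mul_abs' (z i)
      rcases le_total (|z i|) τ with hle | hle
      · rw [max_eq_right (by linarith), min_eq_left hle]
        simp only [mul_zero]
        linarith
      · rw [max_eq_left (by linarith), min_eq_right hle]
        linear_combination hs
  have habs_vstar : ∀ i, |vstar i| = min |z i| τ := by
    intro i
    simp only [vstar]
    have hmin : 0 ≤ min |z i| τ := le_min (abs_nonneg _) (le_of_lt hτpos)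
    rcases eq_or_ne (z i) 0 with h | h
    · simp [h]
      linarith
    · rw [abs_mul, abs_of_nonneg hmin]
      rcases lt_trichotomy (z i) 0 with hc | hc | hc
      · rw [Real.sign_of_neg hc]; norm_num
      · exact absurd hc h
      · rw [Real.sign_of_pos hc]; norm_num
  have hvstar_le : ∀ i, |vstar i| ≤ τ := fun i => (habs_vstar i) ▸ min_le_right _ _
  have hsup_vstar : (⨆ i, |vstar i|) = τ := by
    apply le_antisymm (ciSup_le hvstar_le)
    have h1 : |vstar (σ rhat)| = τ := by
      rw [habs_vstar, min_eq_right]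
      rw [← hσ rhat]
      exact le_of_lt hurτ
    calc τ = |vstar (σ rhat)| := h1.symm
    _ ≤ ⨆ i, |vstar i| :=
      le_ciSup (Finite.bddAbove_range fun i => |vstar i|) (σ rhat)
  have hgv : ∀ i, g i * vstar i = τ * max (|z i| - τ) 0 := by
    intro i
    simp only [hg, vstar]
    rcases le_total (|z i|) τ with hle | hle
    · rw [max_eq_right (by linarith)]; ring
    · have hne : z i ≠ 0 := by
        intro h; rw [h, abs_zero] at hle; linarith
      rw [max_eq_left (by linarith), min_eq_right hle]
      have hsq := sign_sq' (z i) hne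
      linear_combination ((|z i| - τ) * τ) * hsq
  have hg_inner_vstar : ∑ i, g i * vstar i = τ * lam := by
    calc ∑ i, g i * vstar i = ∑ i, τ * max (|z i| - τ) 0 :=
      Finset.sum_congr rfl fun i _ => hgv i
    _ = τ * ∑ i, max (|z i| - τ) 0 := by rw [Finset.mul_sum]
    _ = τ * lam := by rw [hkey]
  have hgabs : ∀ i, |g i| ≤ max (|z i| - τ) 0 := by
    intro i
    simp only [hg]
    rw [abs_mul, abs_of_nonneg (le_max_right (|z i| - τ) 0)]
    calc |Real.sign (z i)| * max (|z i| - τ) 0 ≤ 1 * max (|z i| - τ) 0 :=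
      mul_le_mul_of_nonneg_right (sign_abs_le' _) (le_max_right _ _)
    _ = max (|z i| - τ) 0 := one_mul _
  -- the main inequality
  have hmain : ∀ v, f vstar + (1 / 2) * ∑ i, (v i - vstar i) ^ 2 ≤ f v := by
    intro v
    have hM_ge : ∀ i, |v i| ≤ ⨆ i, |v i| := fun i =>
      le_ciSup (Finite.bddAbove_range fun i => |v i|) i
    set M : ℝ := ⨆ i, |v i| with hM
    have hM0 : 0 ≤ M := le_trans (abs_nonneg _) (hM_ge rhat)
    have hinner_le : ∑ i, g i * v i ≤ lam * M := by
      have h1 : ∀ i ∈ Finset.univ, g i * v i ≤ max (|z i| - τ) 0 * M := by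
        intro i _
        calc g i * v i ≤ |g i * v i| := le_abs_self _
        _ = |g i| * |v i| := abs_mul _ _
        _ ≤ max (|z i| - τ) 0 * M :=
          mul_le_mul (hgabs i) (hM_ge i) (abs_nonneg _) (le_max_right _ _)
      calc ∑ i, g i * v i ≤ ∑ i, max (|z i| - τ) 0 * M := Finset.sum_le_sum h1
      _ = (∑ i, max (|z i| - τ) 0) * M := by rw [Finset.sum_mul]
      _ = lam * M := by rw [hkey]
    have hsum_id : ∑ i, (v i - z i) ^ 2
        = ∑ i, (vstar i - z i) ^ 2 - 2 * ((∑ i, g i * v i) - ∑ i, g i * vstar i)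
          + ∑ i, (v i - vstar i) ^ 2 := by
      have h1 : ∀ i ∈ Finset.univ,
          (v i - z i) ^ 2 = (vstar i - z i) ^ 2 - 2 * (g i * v i - g i * vstar i)
            + (v i - vstar i) ^ 2 := by
        intro i _
        rw [hg_eq i]
        ring
      rw [Finset.sum_congr rfl h1]
      rw [Finset.sum_add_distrib, Finset.sum_sub_distrib, ← Finset.mul_sum,
        Finset.sum_sub_distrib]
    simp only [f, hsup_vstar, ← hM]
    rw [hsum_id, hg_inner_vstar]
    nlinarith [hinner_le]
  constructor
  · intro v
    have h := hmain v
    have h2 : 0 ≤ (1 / 2) * ∑ i, (v i - vstar i) ^ 2 :=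
      mul_nonneg (by norm_num) (Finset.sum_nonneg fun i _ => sq_nonneg _)
    exact le_trans (le_add_of_nonneg_right h2) h
  · intro v hv
    have h1 := hv vstar
    have h2 := hmain v
    have h3' : (1 / 2) * ∑ i, (v i - vstar i) ^ 2 ≤ 0 :=
      (add_le_iff_nonpos_right _).mp (le_trans h2 h1)
    have h3 : ∑ i, (v i - vstar i) ^ 2 ≤ 0 := by linarith
    have h4 : ∑ i, (v i - vstar i) ^ 2 = 0 :=
      le_antisymm h3 (Finset.sum_nonneg fun i _ => sq_nonneg _)
    funext i
    have h5 := (Finset.sum_eq_zero_iff_of_nonneg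
      (fun i _ => sq_nonneg (v i - vstar i))).mp h4 i (Finset.mem_univ i)
    have := pow_eq_zero_iff (n := 2) (by norm_num) |>.mp h5
    linarith [this]
end

section
/- Fix X ∈ ℝ^{p×n}, matrices A, U, Π, Λ of sizes n×J, p×J, n×J, p×J respectively, and parameters α > 0, μ > 0, λ₂ ≥ 0, λ₃ > 0. Let P = [I_{J−1}; −eᵀ] ∈ ℝ^{J×(J−1)} and define G(Ŵ, b̂) = (λ₂/2)‖ŴPᵀ‖_F² + ⟨Λ, ŴPᵀ⟩ + (λ₃/2)‖Pb̂‖₂² + (μ/2)‖ŴPᵀ − U‖_F² + ⟨Π, XᵀŴPᵀ + e b̂ᵀ Pᵀ⟩ + (α/2)‖XᵀŴPᵀ + e b̂ᵀ Pᵀ − A + E‖_F² for Ŵ ∈ ℝ^{p×(J−1)}, b̂ ∈ ℝ^{J−1}. Then G is strictly convex, and (Ŵ, b̂) minimizes G if and only if the block linear system [αXXᵀ + (λ₂+μ)I , αXe ; αeᵀXᵀ , nα + λ₃]·[Ŵ ; b̂ᵀ] = [(XΘ − Λ + μU)·P(PᵀP)^{−1} ; eᵀ(αA − Π − αE)·P(PᵀP)^{−1}]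 holds, where Θ = αA − Π − αE. -/
open Matrix

namespace Stmt11Aux

lemma sum2_split3 {ι κ : Type*} [Fintype ι] [Fintype κ] (f u v w : ι → κ → ℝ) (a b : ℝ)
    (h : ∀ i j, f i j = u i j + a * v i j + b * w i j) :
    ∑ i, ∑ j, f i j
      = (∑ i, ∑ j, u i j) + a * (∑ i, ∑ j, v i j) + b * (∑ i, ∑ j, w i j) := by
  simp only [h, Finset.sum_add_distrib, ← Finset.mul_sum]

lemma sum2_split2 {ι κ : Type*} [Fintype ι] [Fintype κ] (f u v : ι → κ → ℝ) (a : ℝ)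
    (h : ∀ i j, f i j = u i j + a * v i j) :
    ∑ i, ∑ j, f i j = (∑ i, ∑ j, u i j) + a * (∑ i, ∑ j, v i j) := by
  simp only [h, Finset.sum_add_distrib, ← Finset.mul_sum]

lemma sum1_split3 {κ : Type*} [Fintype κ] (f u v w : κ → ℝ) (a b : ℝ)
    (h : ∀ j, f j = u j + a * v j + b * w j) :
    ∑ j, f j = (∑ j, u j) + a * (∑ j, v j) + b * (∑ j, w j) := by
  simp only [h, Finset.sum_add_distrib, ← Finset.mul_sum]

lemma sum2_add {ι κ : Type*} [Fintype ι] [Fintype κ] (f g : ι → κ → ℝ) :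
    ∑ i, ∑ j, (f i j + g i j) = (∑ i, ∑ j, f i j) + (∑ i, ∑ j, g i j) := by
  simp only [Finset.sum_add_distrib]

lemma trace_form {ι κ : Type*} [Fintype ι] [Fintype κ] (Am Bm : Matrix ι κ ℝ) :
    ∑ i, ∑ j, Am i j * Bm i j = Matrix.trace (Am * Bmᵀ) := by
  simp [Matrix.trace, Matrix.diag, Matrix.mul_apply]

lemma trace_shift {a b c : Type*} [Fintype a] [Fintype b] [Fintype c]
    (Xm : Matrix a b ℝ) (S : Matrix b c ℝ) (M : Matrix a c ℝ) :
    Matrix.trace (S * (Xmᵀ * M)ᵀ) = Matrix.trace ((Xm * S) * Mᵀ) := by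
  rw [Matrix.transpose_mul, Matrix.transpose_transpose, ← Matrix.mul_assoc,
    Matrix.trace_mul_comm, ← Matrix.mul_assoc]

lemma forall_inner_zero {ι κ : Type*} [Fintype ι] [Fintype κ] [DecidableEq ι] [DecidableEq κ]
    (K : Matrix ι κ ℝ) :
    (∀ D : Matrix ι κ ℝ, ∑ i, ∑ j, K i j * D i j = 0) ↔ K = 0 := by
  constructor
  · intro h; ext i j
    have := h (Matrix.of fun i' j' => (if i' = i then 1 else 0) * (if j' = j then 1 else 0))
    simpa [Finset.mul_sum, mul_ite, ite_mul, Finset.sum_ite_eq'] using this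
  · rintro rfl; simp

lemma forall_dot_zero {κ : Type*} [Fintype κ] [DecidableEq κ] (u : κ → ℝ) :
    (∀ d : κ → ℝ, ∑ j, u j * d j = 0) ↔ u = 0 := by
  constructor
  · intro h; funext j
    have := h (fun j' => if j' = j then 1 else 0)
    simpa [mul_ite, Finset.sum_ite_eq'] using this
  · rintro rfl; simp

lemma vecMul_eq {a b : Type*} [Fintype a] (v : a → ℝ) (M : Matrix a b ℝ) :
    v ᵥ* M = Mᵀ *ᵥ v := by
  rw [← Matrix.vecMul_transpose, Matrix.transpose_transpose]

lemma sum_col {ι κ : Type*} [Fintype ι] [Fintype κ] (c : ι → κ → ℝ) (g : κ → ℝ) :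
    ∑ i, ∑ j, c i j * g j = ∑ j, (∑ i, c i j) * g j := by
  rw [Finset.sum_comm]
  simp [Finset.sum_mul]

lemma dot_shift {J K : Type*} [Fintype J] [Fintype K] (P : Matrix J K ℝ) (u : J → ℝ) (d : K → ℝ) :
    ∑ j, u j * (P *ᵥ d) j = ∑ j, (Pᵀ *ᵥ u) j * d j := by
  have h1 : u ⬝ᵥ (P *ᵥ d) = (Pᵀ *ᵥ u) ⬝ᵥ d := by
    rw [Matrix.dotProduct_mulVec]
    congr 1
    rw [← Matrix.transpose_transpose P, Matrix.vecMul_transpose, Matrix.transpose_transpose]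
  simpa [dotProduct] using h1

lemma vecMulVec_mul {a b c : Type*} [Fintype b] (u : a → ℝ) (v : b → ℝ) (M : Matrix b c ℝ) :
    vecMulVec u v * M = vecMulVec u (v ᵥ* M) := by
  ext i j
  simp only [Matrix.mul_apply, Matrix.vecMulVec_apply, Matrix.vecMul, dotProduct,
    Finset.mul_sum]
  exact Finset.sum_congr rfl fun k _ => by ring

lemma mul_vecMulVec {a b c : Type*} [Fintype b] (M : Matrix a b ℝ) (u : b → ℝ) (v : c → ℝ) :
    M * vecMulVec u v = vecMulVec (M *ᵥ u) v := by
  ext i j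
  simp only [Matrix.mul_apply, Matrix.vecMulVec_apply, Matrix.mulVec, dotProduct,
    Finset.sum_mul]
  exact Finset.sum_congr rfl fun k _ => by ring

lemma vecMul_vecMulVec {a b : Type*} [Fintype a] (u v : a → ℝ) (w : b → ℝ) :
    u ᵥ* vecMulVec v w = (u ⬝ᵥ v) • w := by
  funext j
  simp only [Matrix.vecMul, dotProduct, Matrix.vecMulVec_apply, Pi.smul_apply,
    smul_eq_mul, Finset.sum_mul]
  exact Finset.sum_congr rfl fun k _ => by ring


variable {p J : ℕ}

lemma P_col_extract (P : Matrix (Fin J) (Fin (J - 1)) ℝ)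
    (hP : ∀ (i : Fin J) (j : Fin (J - 1)),
      P i j = if (i : ℕ) = (j : ℕ) then 1 else if (i : ℕ) = J - 1 then -1 else 0)
    (W : Matrix (Fin p) (Fin (J - 1)) ℝ) (i : Fin p) (j : Fin (J - 1)) :
    (W * Pᵀ) i (Fin.castLE (Nat.sub_le J 1) j) = W i j := by
  have hj := j.isLt
  have key : ∀ k : Fin (J - 1),
      W i k * Pᵀ k (Fin.castLE (Nat.sub_le J 1) j) = if k = j then W i k else 0 := by
    intro k
    rw [Matrix.transpose_apply, hP]
    simp only [Fin.coe_castLE]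
    by_cases hkj : k = j
    · subst hkj; simp
    · have h1 : ¬((j : ℕ) = (k : ℕ)) := fun h => hkj (Fin.ext h.symm)
      rw [if_neg h1, if_neg (by omega : ¬((j:ℕ) = J - 1)), if_neg hkj, mul_zero]
  rw [Matrix.mul_apply, Finset.sum_congr rfl (fun k _ => key k)]
  simp

lemma P_vec_extract (P : Matrix (Fin J) (Fin (J - 1)) ℝ)
    (hP : ∀ (i : Fin J) (j : Fin (J - 1)),
      P i j = if (i : ℕ) = (j : ℕ) then 1 else if (i : ℕ) = J - 1 then -1 else 0)
    (d : Fin (J - 1) → ℝ) (j : Fin (J - 1)) :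
    (P *ᵥ d) (Fin.castLE (Nat.sub_le J 1) j) = d j := by
  have hj := j.isLt
  have key : ∀ k : Fin (J - 1),
      P (Fin.castLE (Nat.sub_le J 1) j) k * d k = if k = j then d k else 0 := by
    intro k
    rw [hP]
    simp only [Fin.coe_castLE]
    by_cases hkj : k = j
    · subst hkj; simp
    · have h1 : ¬((j : ℕ) = (k : ℕ)) := fun h => hkj (Fin.ext h.symm)
      rw [if_neg h1, if_neg (by omega : ¬((j:ℕ) = J - 1)), if_neg hkj, zero_mul]
  rw [Matrix.mulVec, dotProduct, Finset.sum_congr rfl (fun k _ => key k)]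
  simp

lemma PtP_eq (hJ : 2 ≤ J) (P : Matrix (Fin J) (Fin (J - 1)) ℝ)
    (hP : ∀ (i : Fin J) (j : Fin (J - 1)),
      P i j = if (i : ℕ) = (j : ℕ) then 1 else if (i : ℕ) = J - 1 then -1 else 0) :
    Pᵀ * P = 1 + Matrix.of (fun (_ _ : Fin (J - 1)) => (1:ℝ)) := by
  ext a b
  have ha := a.isLt; have hb := b.isLt
  have key : ∀ i : Fin J, Pᵀ a i * P i b
      = (if (i : ℕ) = J - 1 then 1 else 0)
        + (if a = b then (if (i : ℕ) = (a : ℕ) then 1 else 0) else 0) := by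
    intro i
    have hi := i.isLt
    rw [Matrix.transpose_apply, hP, hP]
    have hab : (a = b) ↔ ((a:ℕ) = (b:ℕ)) := Fin.ext_iff
    simp only [hab]
    split_ifs <;> first | (exfalso; omega) | norm_num
  rw [Matrix.mul_apply, Finset.sum_congr rfl (fun i _ => key i), Finset.sum_add_distrib]
  have e1 : ∑ i : Fin J, (if (i : ℕ) = J - 1 then (1:ℝ) else 0) = 1 := by
    have : ∀ i : Fin J, (if (i : ℕ) = J - 1 then (1:ℝ) else 0)
        = (if i = (⟨J-1, by omega⟩ : Fin J) then (1:ℝ) else 0) := by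
      intro i; congr 1; simp [Fin.ext_iff]
    rw [Finset.sum_congr rfl (fun i _ => this i), Finset.sum_ite_eq']
    simp
  have e2 : ∑ i : Fin J, (if a = b then (if (i : ℕ) = (a : ℕ) then (1:ℝ) else 0) else 0)
      = if a = b then 1 else 0 := by
    by_cases hab : a = b
    · simp only [hab, if_true]
      have : ∀ i : Fin J, (if (i : ℕ) = (b : ℕ) then (1:ℝ) else 0)
          = (if i = Fin.castLE (Nat.sub_le J 1) b then (1:ℝ) else 0) := by
        intro i; congr 1; simp [Fin.ext_iff]
      rw [Finset.sum_congr rfl (fun i _ => this i), Finset.sum_ite_eq']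
      simp
    · simp [hab]
  rw [e1, e2]
  simp only [Matrix.add_apply, Matrix.of_apply, Matrix.one_apply]
  by_cases hab : a = b <;> simp [hab]


lemma Emat_mul_Emat (hJ : 2 ≤ J) :
    (Matrix.of (fun (_ _ : Fin (J - 1)) => (1:ℝ))) * (Matrix.of (fun (_ _ : Fin (J - 1)) => (1:ℝ)))
      = ((J:ℝ) - 1) • Matrix.of (fun (_ _ : Fin (J - 1)) => (1:ℝ)) := by
  ext a b
  simp [Matrix.mul_apply, Finset.card_univ]
  rw [Nat.cast_sub (by omega : 1 ≤ J)]
  simp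

lemma T_mul_Tinv (hJ : 2 ≤ J) (P : Matrix (Fin J) (Fin (J - 1)) ℝ)
    (hP : ∀ (i : Fin J) (j : Fin (J - 1)),
      P i j = if (i : ℕ) = (j : ℕ) then 1 else if (i : ℕ) = J - 1 then -1 else 0) :
    (Pᵀ * P) * (1 - ((J:ℝ)⁻¹) • Matrix.of (fun (_ _ : Fin (J - 1)) => (1:ℝ))) = 1
    ∧ (1 - ((J:ℝ)⁻¹) • Matrix.of (fun (_ _ : Fin (J - 1)) => (1:ℝ))) * (Pᵀ * P) = 1 := by
  have hJ0 : (J:ℝ) ≠ 0 := by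
    have : (0:ℝ) < (J:ℝ) := by exact_mod_cast (by omega : 0 < J)
    linarith
  set E := Matrix.of (fun (_ _ : Fin (J - 1)) => (1:ℝ)) with hE
  have hE2 := Emat_mul_Emat hJ
  rw [← hE] at hE2
  rw [PtP_eq hJ P hP, ← hE]
  have hc : (J:ℝ)⁻¹ * ((J:ℝ) - 1) = 1 - (J:ℝ)⁻¹ := by
    field_simp
  constructor
  · rw [Matrix.add_mul, Matrix.mul_sub, Matrix.mul_sub, Matrix.mul_smul, Matrix.mul_smul,
      hE2, mul_one, one_mul, smul_smul, hc]
    simp only [mul_one, one_mul]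
    module
  · rw [Matrix.sub_mul, Matrix.mul_add, Matrix.mul_add, Matrix.smul_mul, Matrix.smul_mul,
      hE2, mul_one, one_mul, smul_smul, hc]
    simp only [mul_one, one_mul]
    module


section core

variable {p n J : ℕ}
variable (X : Matrix (Fin p) (Fin n) ℝ) (A Piv : Matrix (Fin n) (Fin J) ℝ)
  (U Lam : Matrix (Fin p) (Fin J) ℝ) (al mu lam2 lam3 : ℝ)
  (P : Matrix (Fin J) (Fin (J - 1)) ℝ)

noncomputable def Gf : Matrix (Fin p) (Fin (J - 1)) ℝ × (Fin (J - 1) → ℝ) → ℝ := fun Wb =>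
  lam2 / 2 * (∑ i, ∑ j, ((Wb.1 * Pᵀ) i j) ^ 2)
  + (∑ i, ∑ j, Lam i j * (Wb.1 * Pᵀ) i j)
  + lam3 / 2 * (∑ j, ((P *ᵥ Wb.2) j) ^ 2)
  + mu / 2 * (∑ i, ∑ j, ((Wb.1 * Pᵀ) i j - U i j) ^ 2)
  + (∑ i, ∑ j, Piv i j * ((Xᵀ * (Wb.1 * Pᵀ)) i j + (P *ᵥ Wb.2) j))
  + al / 2 * (∑ i, ∑ j, ((Xᵀ * (Wb.1 * Pᵀ)) i j + (P *ᵥ Wb.2) j - A i j + 1) ^ 2)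

noncomputable def Df (x y : Matrix (Fin p) (Fin (J - 1)) ℝ × (Fin (J - 1) → ℝ)) : ℝ :=
  lam2 * (∑ i, ∑ j, (x.1 * Pᵀ) i j * (y.1 * Pᵀ) i j)
  + (∑ i, ∑ j, Lam i j * (y.1 * Pᵀ) i j)
  + lam3 * (∑ j, (P *ᵥ x.2) j * (P *ᵥ y.2) j)
  + mu * (∑ i, ∑ j, ((x.1 * Pᵀ) i j - U i j) * (y.1 * Pᵀ) i j)
  + (∑ i, ∑ j, Piv i j * ((Xᵀ * (y.1 * Pᵀ)) i j + (P *ᵥ y.2) j))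
  + al * (∑ i, ∑ j, ((Xᵀ * (x.1 * Pᵀ)) i j + (P *ᵥ x.2) j - A i j + 1)
      * ((Xᵀ * (y.1 * Pᵀ)) i j + (P *ᵥ y.2) j))

noncomputable def Qf (y : Matrix (Fin p) (Fin (J - 1)) ℝ × (Fin (J - 1) → ℝ)) : ℝ :=
  lam2 / 2 * (∑ i, ∑ j, ((y.1 * Pᵀ) i j) ^ 2)
  + lam3 / 2 * (∑ j, ((P *ᵥ y.2) j) ^ 2)
  + mu / 2 * (∑ i, ∑ j, ((y.1 * Pᵀ) i j) ^ 2)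
  + al / 2 * (∑ i, ∑ j, ((Xᵀ * (y.1 * Pᵀ)) i j + (P *ᵥ y.2) j) ^ 2)

lemma expand (x y : Matrix (Fin p) (Fin (J - 1)) ℝ × (Fin (J - 1) → ℝ)) (t : ℝ) :
    Gf X A Piv U Lam al mu lam2 lam3 P (x + t • y)
      = Gf X A Piv U Lam al mu lam2 lam3 P x
        + t * Df X A Piv U Lam al mu lam2 lam3 P x y
        + t ^ 2 * Qf X al mu lam2 lam3 P y := by
  have hw : ∀ (i : Fin p) (j : Fin J),
      ((x + t • y).1 * Pᵀ) i j = (x.1 * Pᵀ) i j + t * (y.1 * Pᵀ) i j := by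
    intro i j
    have h : (x + t • y).1 = x.1 + t • y.1 := rfl
    rw [h, Matrix.add_mul, Matrix.smul_mul]
    simp
  have hxw : ∀ (i : Fin n) (j : Fin J),
      (Xᵀ * ((x + t • y).1 * Pᵀ)) i j = (Xᵀ * (x.1 * Pᵀ)) i j + t * (Xᵀ * (y.1 * Pᵀ)) i j := by
    intro i j
    have h : (x + t • y).1 = x.1 + t • y.1 := rfl
    rw [h, Matrix.add_mul, Matrix.smul_mul, Matrix.mul_add, Matrix.mul_smul]
    simp
  have hv : ∀ (j : Fin J),
      (P *ᵥ (x + t • y).2) j = (P *ᵥ x.2) j + t * (P *ᵥ y.2) j := by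
    intro j
    have h : (x + t • y).2 = x.2 + t • y.2 := rfl
    rw [h, Matrix.mulVec_add, Matrix.mulVec_smul]
    simp
  unfold Gf Df Qf
  simp only [hw, hxw, hv]
  rw [sum2_split3 (fun i j => ((x.1 * Pᵀ) i j + t * (y.1 * Pᵀ) i j) ^ 2)
      (fun i j => ((x.1 * Pᵀ) i j) ^ 2)
      (fun i j => (x.1 * Pᵀ) i j * (y.1 * Pᵀ) i j)
      (fun i j => ((y.1 * Pᵀ) i j) ^ 2) (2 * t) (t ^ 2) (by intro i j; ring)]
  rw [sum2_split2 (fun i j => Lam i j * ((x.1 * Pᵀ) i j + t * (y.1 * Pᵀ) i j))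
      (fun i j => Lam i j * (x.1 * Pᵀ) i j)
      (fun i j => Lam i j * (y.1 * Pᵀ) i j) t (by intro i j; ring)]
  rw [sum1_split3 (fun j => ((P *ᵥ x.2) j + t * (P *ᵥ y.2) j) ^ 2)
      (fun j => ((P *ᵥ x.2) j) ^ 2)
      (fun j => (P *ᵥ x.2) j * (P *ᵥ y.2) j)
      (fun j => ((P *ᵥ y.2) j) ^ 2) (2 * t) (t ^ 2) (by intro j; ring)]
  rw [sum2_split3 (fun i j => ((x.1 * Pᵀ) i j + t * (y.1 * Pᵀ) i j - U i j) ^ 2)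
      (fun i j => ((x.1 * Pᵀ) i j - U i j) ^ 2)
      (fun i j => ((x.1 * Pᵀ) i j - U i j) * (y.1 * Pᵀ) i j)
      (fun i j => ((y.1 * Pᵀ) i j) ^ 2) (2 * t) (t ^ 2) (by intro i j; ring)]
  rw [sum2_split2 (fun i j => Piv i j * ((Xᵀ * (x.1 * Pᵀ)) i j + t * (Xᵀ * (y.1 * Pᵀ)) i j
        + ((P *ᵥ x.2) j + t * (P *ᵥ y.2) j)))
      (fun i j => Piv i j * ((Xᵀ * (x.1 * Pᵀ)) i j + (P *ᵥ x.2) j))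
      (fun i j => Piv i j * ((Xᵀ * (y.1 * Pᵀ)) i j + (P *ᵥ y.2) j)) t (by intro i j; ring)]
  rw [sum2_split3 (fun i j => ((Xᵀ * (x.1 * Pᵀ)) i j + t * (Xᵀ * (y.1 * Pᵀ)) i j
        + ((P *ᵥ x.2) j + t * (P *ᵥ y.2) j) - A i j + 1) ^ 2)
      (fun i j => ((Xᵀ * (x.1 * Pᵀ)) i j + (P *ᵥ x.2) j - A i j + 1) ^ 2)
      (fun i j => ((Xᵀ * (x.1 * Pᵀ)) i j + (P *ᵥ x.2) j - A i j + 1)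
        * ((Xᵀ * (y.1 * Pᵀ)) i j + (P *ᵥ y.2) j))
      (fun i j => ((Xᵀ * (y.1 * Pᵀ)) i j + (P *ᵥ y.2) j) ^ 2) (2 * t) (t ^ 2)
      (by intro i j; ring)]
  ring

lemma Qf_nonneg (hal : 0 < al) (hmu : 0 < mu) (hlam2 : 0 ≤ lam2) (hlam3 : 0 < lam3)
    (y : Matrix (Fin p) (Fin (J - 1)) ℝ × (Fin (J - 1) → ℝ)) :
    0 ≤ Qf X al mu lam2 lam3 P y := by
  unfold Qf
  have s1 : (0:ℝ) ≤ ∑ i, ∑ j, ((y.1 * Pᵀ) i j) ^ 2 :=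
    Finset.sum_nonneg fun i _ => Finset.sum_nonneg fun j _ => sq_nonneg _
  have s2 : (0:ℝ) ≤ ∑ j, ((P *ᵥ y.2) j) ^ 2 := Finset.sum_nonneg fun j _ => sq_nonneg _
  have s3 : (0:ℝ) ≤ ∑ i, ∑ j, ((Xᵀ * (y.1 * Pᵀ)) i j + (P *ᵥ y.2) j) ^ 2 :=
    Finset.sum_nonneg fun i _ => Finset.sum_nonneg fun j _ => sq_nonneg _
  have := mul_nonneg (by linarith : (0:ℝ) ≤ lam2 / 2) s1
  have := mul_nonneg (by linarith : (0:ℝ) ≤ lam3 / 2) s2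
  have := mul_nonneg (by linarith : (0:ℝ) ≤ mu / 2) s1
  have := mul_nonneg (by linarith : (0:ℝ) ≤ al / 2) s3
  linarith

lemma Qf_pos (hP : ∀ (i : Fin J) (j : Fin (J - 1)),
      P i j = if (i : ℕ) = (j : ℕ) then 1 else if (i : ℕ) = J - 1 then -1 else 0)
    (hal : 0 < al) (hmu : 0 < mu) (hlam2 : 0 ≤ lam2) (hlam3 : 0 < lam3)
    (y : Matrix (Fin p) (Fin (J - 1)) ℝ × (Fin (J - 1) → ℝ)) (hy : y ≠ 0) :
    0 < Qf X al mu lam2 lam3 P y := by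
  have s1 : (0:ℝ) ≤ ∑ i, ∑ j, ((y.1 * Pᵀ) i j) ^ 2 :=
    Finset.sum_nonneg fun i _ => Finset.sum_nonneg fun j _ => sq_nonneg _
  have s2 : (0:ℝ) ≤ ∑ j, ((P *ᵥ y.2) j) ^ 2 := Finset.sum_nonneg fun j _ => sq_nonneg _
  have s3 : (0:ℝ) ≤ ∑ i, ∑ j, ((Xᵀ * (y.1 * Pᵀ)) i j + (P *ᵥ y.2) j) ^ 2 :=
    Finset.sum_nonneg fun i _ => Finset.sum_nonneg fun j _ => sq_nonneg _
  have t1 := mul_nonneg (by linarith : (0:ℝ) ≤ lam2 / 2) s1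
  have t3 := mul_nonneg (by linarith : (0:ℝ) ≤ al / 2) s3
  unfold Qf
  by_cases h1 : y.1 = 0
  · have h2 : y.2 ≠ 0 := by
      intro h
      exact hy (Prod.ext_iff.mpr ⟨h1, h⟩)
    have h3 : ∃ j, y.2 j ≠ 0 := by
      by_contra h; push_neg at h; exact h2 (funext h)
    obtain ⟨j, hj⟩ := h3
    have hval : (P *ᵥ y.2) (Fin.castLE (Nat.sub_le J 1) j) = y.2 j := P_vec_extract P hP y.2 j
    have hsq : 0 < ((P *ᵥ y.2) (Fin.castLE (Nat.sub_le J 1) j)) ^ 2 := by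
      rw [hval]
      exact lt_of_le_of_ne (sq_nonneg _) (Ne.symm (pow_ne_zero 2 hj))
    have hrow : ((P *ᵥ y.2) (Fin.castLE (Nat.sub_le J 1) j)) ^ 2 ≤ ∑ jj, ((P *ᵥ y.2) jj) ^ 2 :=
      Finset.single_le_sum (f := fun jj => ((P *ᵥ y.2) jj) ^ 2)
        (fun _ _ => sq_nonneg _) (Finset.mem_univ _)
    have hpos : 0 < lam3 / 2 * (∑ jj, ((P *ᵥ y.2) jj) ^ 2) :=
      mul_pos (by linarith) (lt_of_lt_of_le hsq hrow)
    have t2 := mul_nonneg (by linarith : (0:ℝ) ≤ mu / 2) s1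
    linarith
  · have h3 : ∃ i j, y.1 i j ≠ 0 := by
      by_contra h; push_neg at h
      exact h1 (by ext i j; simpa using h i j)
    obtain ⟨i, j, hij⟩ := h3
    have hval : (y.1 * Pᵀ) i (Fin.castLE (Nat.sub_le J 1) j) = y.1 i j :=
      P_col_extract P hP y.1 i j
    have hsq : 0 < ((y.1 * Pᵀ) i (Fin.castLE (Nat.sub_le J 1) j)) ^ 2 := by
      rw [hval]
      exact lt_of_le_of_ne (sq_nonneg _) (Ne.symm (pow_ne_zero 2 hij))
    have hrow : ((y.1 * Pᵀ) i (Fin.castLE (Nat.sub_le J 1) j)) ^ 2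
        ≤ ∑ jj, ((y.1 * Pᵀ) i jj) ^ 2 :=
      Finset.single_le_sum (f := fun jj => ((y.1 * Pᵀ) i jj) ^ 2)
        (fun _ _ => sq_nonneg _) (Finset.mem_univ _)
    have hsum : ∑ jj, ((y.1 * Pᵀ) i jj) ^ 2 ≤ ∑ ii, ∑ jj, ((y.1 * Pᵀ) ii jj) ^ 2 :=
      Finset.single_le_sum (f := fun ii => ∑ jj, ((y.1 * Pᵀ) ii jj) ^ 2)
        (fun ii _ => Finset.sum_nonneg fun jj _ => sq_nonneg _) (Finset.mem_univ i)
    have hpos : 0 < mu / 2 * (∑ ii, ∑ jj, ((y.1 * Pᵀ) ii jj) ^ 2) :=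
      mul_pos (by linarith) (lt_of_lt_of_le hsq (le_trans hrow hsum))
    have t2 := mul_nonneg (by linarith : (0:ℝ) ≤ lam3 / 2) s2
    linarith

lemma Df_split (x y : Matrix (Fin p) (Fin (J - 1)) ℝ × (Fin (J - 1) → ℝ)) :
    Df X A Piv U Lam al mu lam2 lam3 P x y
      = Df X A Piv U Lam al mu lam2 lam3 P x (y.1, 0)
        + Df X A Piv U Lam al mu lam2 lam3 P x (0, y.2) := by
  unfold Df
  simp only [Matrix.zero_mul, Matrix.mul_zero, Matrix.mulVec_zero, Matrix.zero_apply,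
    Pi.zero_apply, mul_zero, zero_mul, add_zero, zero_add, Finset.sum_const_zero]
  simp only [mul_add, sum2_add]
  ring

noncomputable def Fmat (x : Matrix (Fin p) (Fin (J - 1)) ℝ × (Fin (J - 1) → ℝ)) :
    Matrix (Fin p) (Fin J) ℝ :=
  lam2 • (x.1 * Pᵀ) + Lam + mu • (x.1 * Pᵀ - U) + X * Piv
    + al • (X * (Matrix.of fun i j => (Xᵀ * (x.1 * Pᵀ)) i j + (P *ᵥ x.2) j - A i j + 1))

lemma grad_W (x : Matrix (Fin p) (Fin (J - 1)) ℝ × (Fin (J - 1) → ℝ))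
    (D : Matrix (Fin p) (Fin (J - 1)) ℝ) :
    Df X A Piv U Lam al mu lam2 lam3 P x (D, 0)
      = ∑ i, ∑ j, ((Fmat X A Piv U Lam al mu lam2 P x) * P) i j * D i j := by
  unfold Df Fmat
  simp only [Matrix.mulVec_zero, Pi.zero_apply, mul_zero, add_zero, Finset.sum_const_zero]
  have e1 : ∑ i, ∑ j, (x.1 * Pᵀ) i j * (D * Pᵀ) i j
      = Matrix.trace ((x.1 * Pᵀ) * (D * Pᵀ)ᵀ) := trace_form _ _
  have e2 : ∑ i, ∑ j, Lam i j * (D * Pᵀ) i j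
      = Matrix.trace (Lam * (D * Pᵀ)ᵀ) := trace_form _ _
  have e3 : ∑ i, ∑ j, ((x.1 * Pᵀ) i j - U i j) * (D * Pᵀ) i j
      = Matrix.trace ((x.1 * Pᵀ - U) * (D * Pᵀ)ᵀ) := trace_form _ _
  have e4 : ∑ i, ∑ j, Piv i j * (Xᵀ * (D * Pᵀ)) i j
      = Matrix.trace (Piv * (Xᵀ * (D * Pᵀ))ᵀ) := trace_form _ _
  have e5 : ∑ i, ∑ j, ((Xᵀ * (x.1 * Pᵀ)) i j + (P *ᵥ x.2) j - A i j + 1)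
        * (Xᵀ * (D * Pᵀ)) i j
      = Matrix.trace ((Matrix.of fun i j => (Xᵀ * (x.1 * Pᵀ)) i j + (P *ᵥ x.2) j - A i j + 1)
        * (Xᵀ * (D * Pᵀ))ᵀ) := trace_form _ _
  rw [e1, e2, e3, e4, e5,
    trace_shift X Piv (D * Pᵀ),
    trace_shift X (Matrix.of fun i j => (Xᵀ * (x.1 * Pᵀ)) i j + (P *ᵥ x.2) j - A i j + 1)
      (D * Pᵀ),
    trace_form _ D]
  simp only [Matrix.transpose_mul, Matrix.transpose_transpose, Matrix.add_mul,
    Matrix.smul_mul, Matrix.trace_add, Matrix.trace_smul, smul_eq_mul, Matrix.mul_assoc]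
  try ring

noncomputable def uvecDef (x : Matrix (Fin p) (Fin (J - 1)) ℝ × (Fin (J - 1) → ℝ)) :
    Fin J → ℝ := fun j =>
  lam3 * (P *ᵥ x.2) j
    + ∑ i, (Piv i j + al * ((Xᵀ * (x.1 * Pᵀ)) i j + (P *ᵥ x.2) j - A i j + 1))

lemma grad_b (x : Matrix (Fin p) (Fin (J - 1)) ℝ × (Fin (J - 1) → ℝ)) (d : Fin (J - 1) → ℝ) :
    Df X A Piv U Lam al mu lam2 lam3 P x (0, d)
      = ∑ j, (Pᵀ *ᵥ uvecDef X A Piv al lam3 P x) j * d j := by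
  unfold Df uvecDef
  simp only [Matrix.zero_mul, Matrix.mul_zero, Matrix.zero_apply, mul_zero, zero_mul,
    add_zero, zero_add, Finset.sum_const_zero]
  rw [← dot_shift P _ d]
  rw [sum_col Piv (fun j => (P *ᵥ d) j)]
  rw [sum_col (fun i j => (Xᵀ * (x.1 * Pᵀ)) i j + (P *ᵥ x.2) j - A i j + 1)
    (fun j => (P *ᵥ d) j)]
  have key : ∀ j : Fin J,
      (lam3 * (P *ᵥ x.2) j
        + ∑ i, (Piv i j + al * ((Xᵀ * (x.1 * Pᵀ)) i j + (P *ᵥ x.2) j - A i j + 1)))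
        * (P *ᵥ d) j
      = lam3 * ((P *ᵥ x.2) j * (P *ᵥ d) j)
        + (∑ i, Piv i j) * (P *ᵥ d) j
        + al * ((∑ i, ((Xᵀ * (x.1 * Pᵀ)) i j + (P *ᵥ x.2) j - A i j + 1)) * (P *ᵥ d) j) := by
    intro j
    rw [Finset.sum_add_distrib, ← Finset.mul_sum]
    ring
  rw [Finset.sum_congr rfl (fun j _ => key j), Finset.sum_add_distrib,
    Finset.sum_add_distrib, ← Finset.mul_sum, ← Finset.mul_sum]
  try ring


lemma vecMul_smulMat {a b : Type*} [Fintype a] (v : a → ℝ) (c : ℝ) (M : Matrix a b ℝ) :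
    v ᵥ* (c • M) = c • (v ᵥ* M) := by
  funext j
  simp only [Matrix.vecMul, dotProduct, Matrix.smul_apply, Pi.smul_apply,
    smul_eq_mul, Finset.mul_sum]
  exact Finset.sum_congr rfl fun k _ => by ring

lemma Fmat_eq (x : Matrix (Fin p) (Fin (J - 1)) ℝ × (Fin (J - 1) → ℝ)) :
    Fmat X A Piv U Lam al mu lam2 P x
      = (al • (X * Xᵀ) * x.1 + (lam2 + mu) • x.1
          + Matrix.of (fun i j => al * (∑ k, X i k) * x.2 j)) * Pᵀ
        - (X * (Matrix.of fun i j => al * A i j - Piv i j - al) - Lam + mu • U) := by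
  have hones : (Matrix.of fun (i : Fin n) (j : Fin J) => al * A i j - Piv i j - al)
      = al • A - Piv - al • vecMulVec (fun _ => (1:ℝ)) (fun _ => (1:ℝ)) := by
    ext i j
    simp [Matrix.vecMulVec_apply]
  have hofK : (Matrix.of fun (i : Fin p) (j : Fin (J-1)) => al * (∑ k, X i k) * x.2 j)
      = al • vecMulVec (X *ᵥ (fun _ => 1)) x.2 := by
    ext i j
    simp [Matrix.vecMulVec_apply, Matrix.mulVec, dotProduct]
    ring
  have hAm : (Matrix.of fun (i : Fin n) (j : Fin J) =>
        (Xᵀ * (x.1 * Pᵀ)) i j + (P *ᵥ x.2) j - A i j + 1)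
      = Xᵀ * (x.1 * Pᵀ) + vecMulVec (fun _ => (1:ℝ)) (P *ᵥ x.2) - A
        + vecMulVec (fun _ => (1:ℝ)) (fun _ => (1:ℝ)) := by
    ext i j
    simp [Matrix.vecMulVec_apply]
  unfold Fmat
  rw [hAm, hofK, hones]
  simp only [Matrix.mul_add, Matrix.mul_sub, Matrix.add_mul, Matrix.sub_mul, Matrix.mul_smul,
    Matrix.smul_mul, mul_vecMulVec, vecMulVec_mul, Matrix.vecMul_transpose, Matrix.mul_assoc]
  module

lemma uvec_eq (x : Matrix (Fin p) (Fin (J - 1)) ℝ × (Fin (J - 1) → ℝ)) :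
    uvecDef X A Piv al lam3 P x
      = P *ᵥ (al • ((X *ᵥ (fun _ => 1)) ᵥ* x.1) + ((n:ℝ) * al + lam3) • x.2)
        - (fun _ => (1:ℝ)) ᵥ* (Matrix.of fun i j => al * A i j - Piv i j - al) := by
  have hones : (Matrix.of fun (i : Fin n) (j : Fin J) => al * A i j - Piv i j - al)
      = al • A - Piv - al • vecMulVec (fun _ => (1:ℝ)) (fun _ => (1:ℝ)) := by
    ext i j
    simp [Matrix.vecMulVec_apply]
  have h0 : uvecDef X A Piv al lam3 P x
      = lam3 • (P *ᵥ x.2)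
        + (fun _ => (1:ℝ)) ᵥ* (Piv + al • (Xᵀ * (x.1 * Pᵀ)
            + vecMulVec (fun _ => (1:ℝ)) (P *ᵥ x.2) - A
            + vecMulVec (fun _ => (1:ℝ)) (fun _ => (1:ℝ)))) := by
    funext j
    simp only [uvecDef, Pi.add_apply, Pi.smul_apply, smul_eq_mul, Matrix.vecMul,
      dotProduct, Matrix.add_apply, Matrix.sub_apply, Matrix.smul_apply,
      Matrix.vecMulVec_apply]
    congr 1
    refine Finset.sum_congr rfl fun i _ => ?_
    ring
  rw [h0, hones]
  have hdot : ((fun (_ : Fin n) => (1:ℝ)) ⬝ᵥ (fun _ => (1:ℝ))) = (n:ℝ) := by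
    simp [dotProduct]
  rw [Matrix.vecMul_add, vecMul_smulMat, Matrix.vecMul_add, Matrix.vecMul_sub,
    Matrix.vecMul_add, vecMul_vecMulVec, vecMul_vecMulVec, hdot]
  have hshift : (fun (_ : Fin n) => (1:ℝ)) ᵥ* (Xᵀ * (x.1 * Pᵀ))
      = P *ᵥ ((X *ᵥ (fun _ => 1)) ᵥ* x.1) := by
    rw [← Matrix.vecMul_vecMul, Matrix.vecMul_transpose, ← Matrix.vecMul_vecMul,
      Matrix.vecMul_transpose]
  rw [hshift, Matrix.vecMul_sub, Matrix.vecMul_sub, vecMul_smulMat, vecMul_smulMat,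
    vecMul_vecMulVec, Matrix.mulVec_add, Matrix.mulVec_smul, Matrix.mulVec_smul, hdot]
  module


end core

end Stmt11Aux

open Stmt11Aux in
/-- The objective `G` of the `(W,b)`-subproblem of ADMM for the elastic-net regularized
MSVM (after the substitution `W = ŴPᵀ`, `b = Pb̂`) is strictly convex, and `(Ŵ, b̂)`
minimizes `G` iff the block linear system (8) of the paper holds. -/
theorem stmt_11 (p n J : ℕ) (hJ : 2 ≤ J)
    (X : Matrix (Fin p) (Fin n) ℝ)
    (A Piv : Matrix (Fin n) (Fin J) ℝ)
    (U Lam : Matrix (Fin p) (Fin J) ℝ)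
    (α μ lam2 lam3 : ℝ) (hα : 0 < α) (hμ : 0 < μ) (hlam2 : 0 ≤ lam2) (hlam3 : 0 < lam3)
    (P : Matrix (Fin J) (Fin (J - 1)) ℝ)
    (hP : ∀ (i : Fin J) (j : Fin (J - 1)),
      P i j = if (i : ℕ) = (j : ℕ) then 1 else if (i : ℕ) = J - 1 then -1 else 0) :
    let G : Matrix (Fin p) (Fin (J - 1)) ℝ × (Fin (J - 1) → ℝ) → ℝ := fun Wb =>
      lam2 / 2 * (∑ i, ∑ j, ((Wb.1 * Pᵀ) i j) ^ 2)
      + (∑ i, ∑ j, Lam i j * (Wb.1 * Pᵀ) i j)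
      + lam3 / 2 * (∑ j, ((P *ᵥ Wb.2) j) ^ 2)
      + μ / 2 * (∑ i, ∑ j, ((Wb.1 * Pᵀ) i j - U i j) ^ 2)
      + (∑ i, ∑ j, Piv i j * ((Xᵀ * (Wb.1 * Pᵀ)) i j + (P *ᵥ Wb.2) j))
      + α / 2 * (∑ i, ∑ j, ((Xᵀ * (Wb.1 * Pᵀ)) i j + (P *ᵥ Wb.2) j - A i j + 1) ^ 2)
    let Th : Matrix (Fin n) (Fin J) ℝ := Matrix.of fun i j => α * A i j - Piv i j - α
    let Q : Matrix (Fin J) (Fin (J - 1)) ℝ := P * (Pᵀ * P)⁻¹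
    StrictConvexOn ℝ Set.univ G ∧
    (∀ (What : Matrix (Fin p) (Fin (J - 1)) ℝ) (bhat : Fin (J - 1) → ℝ),
      (∀ (W' : Matrix (Fin p) (Fin (J - 1)) ℝ) (b' : Fin (J - 1) → ℝ),
          G (What, bhat) ≤ G (W', b')) ↔
        (α • (X * Xᵀ) * What + (lam2 + μ) • What
            + Matrix.of (fun i j => α * (∑ k, X i k) * bhat j)
          = (X * Th - Lam + μ • U) * Q ∧
        (∀ j, α * (∑ i, (∑ k, X i k) * What i j) + ((n : ℝ) * α + lam3) * bhat j
          = ∑ jj, (∑ i, Th i jj) * Q jj j))) := by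
  intro G Th Q
  have hG : G = Gf X A Piv U Lam α μ lam2 lam3 P := rfl
  have hTh : Th = Matrix.of fun i j => α * A i j - Piv i j - α := rfl
  have hQdef : Q = P * (Pᵀ * P)⁻¹ := rfl
  haveI hInv : Invertible (Pᵀ * P) :=
    ⟨1 - ((J:ℝ)⁻¹) • Matrix.of (fun _ _ => (1:ℝ)),
      (T_mul_Tinv hJ P hP).2, (T_mul_Tinv hJ P hP).1⟩
  rw [hG, hTh, hQdef]
  constructor
  · -- strict convexity
    refine ⟨convex_univ, ?_⟩
    intro a _ b _ hab t s ht hs hts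
    have hs1 : s = 1 - t := by linarith
    subst hs1
    have hne : a - b ≠ 0 := sub_ne_zero.mpr hab
    have hQpos := Qf_pos X α μ lam2 lam3 P hP hα hμ hlam2 hlam3 (a - b) hne
    have hx : t • a + (1 - t) • b + (1 - t) • (a - b) = a := by module
    have hy : t • a + (1 - t) • b + (-t) • (a - b) = b := by module
    have ea : Gf X A Piv U Lam α μ lam2 lam3 P a
        = Gf X A Piv U Lam α μ lam2 lam3 P (t • a + (1 - t) • b)
          + (1 - t) * Df X A Piv U Lam α μ lam2 lam3 P (t • a + (1 - t) • b) (a - b)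
          + (1 - t) ^ 2 * Qf X α μ lam2 lam3 P (a - b) := by
      conv_lhs => rw [← hx]
      exact expand X A Piv U Lam α μ lam2 lam3 P _ _ _
    have eb : Gf X A Piv U Lam α μ lam2 lam3 P b
        = Gf X A Piv U Lam α μ lam2 lam3 P (t • a + (1 - t) • b)
          + (-t) * Df X A Piv U Lam α μ lam2 lam3 P (t • a + (1 - t) • b) (a - b)
          + (-t) ^ 2 * Qf X α μ lam2 lam3 P (a - b) := by
      conv_lhs => rw [← hy]
      exact expand X A Piv U Lam α μ lam2 lam3 P _ _ _
    simp only [smul_eq_mul]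
    rw [ea, eb]
    nlinarith [mul_pos ht hs, hQpos]
  · -- optimality conditions
    intro What bhat
    -- instantيated auxiliary identities
    have hFE := Fmat_eq X A Piv U Lam α μ lam2 P (What, bhat)
    have huE := uvec_eq X A Piv α lam3 P (What, bhat)
    -- minimality iff vanishing directional derivative
    have hminiff :
        (∀ (W' : Matrix (Fin p) (Fin (J - 1)) ℝ) (b' : Fin (J - 1) → ℝ),
            Gf X A Piv U Lam α μ lam2 lam3 P (What, bhat)
              ≤ Gf X A Piv U Lam α μ lam2 lam3 P (W', b'))
          ↔ (∀ y, Df X A Piv U Lam α μ lam2 lam3 P (What, bhat) y = 0) := by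
      constructor
      · intro hmin y
        have ht' : ∀ t : ℝ,
            0 ≤ t * Df X A Piv U Lam α μ lam2 lam3 P (What, bhat) y
              + t ^ 2 * Qf X α μ lam2 lam3 P y := by
          intro t
          have h := hmin ((What, bhat) + t • y).1 ((What, bhat) + t • y).2
          rw [Prod.mk.eta] at h
          rw [expand X A Piv U Lam α μ lam2 lam3 P (What, bhat) y t] at h
          linarith
        set D := Df X A Piv U Lam α μ lam2 lam3 P (What, bhat) y with hD
        set q := Qf X α μ lam2 lam3 P y with hq'
        have hq : 0 ≤ q := Qf_nonneg X α μ lam2 lam3 P hα hμ hlam2 hlam3 y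
        have hq1 : (0:ℝ) < q + 1 := by linarith
        have h := ht' (-(D / (q + 1)))
        have e : (-(D / (q + 1))) * D + (-(D / (q + 1))) ^ 2 * q
            = -(D ^ 2) / ((q + 1) ^ 2) := by
          field_simp
          ring
        rw [e] at h
        have h2 : (0:ℝ) * ((q + 1) ^ 2) ≤ -(D ^ 2) :=
          (le_div_iff₀ (by positivity)).mp h
        have h3 : D ^ 2 = 0 := le_antisymm (by linarith) (sq_nonneg D)
        exact pow_eq_zero_iff two_ne_zero |>.mp h3
      · intro hgrad W' b'
        have he := expand X A Piv U Lam α μ lam2 lam3 P (What, bhat)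
          ((W', b') - (What, bhat)) 1
        have hxx : (What, bhat) + (1:ℝ) • ((W', b') - (What, bhat)) = (W', b') := by
          module
        rw [hxx, hgrad _] at he
        have hQn := Qf_nonneg X α μ lam2 lam3 P hα hμ hlam2 hlam3 ((W', b') - (What, bhat))
        rw [he]
        linarith
    rw [hminiff]
    -- split the directional derivative condition
    constructor
    · intro h
      constructor
      · -- system equation 1
        have hFP : Fmat X A Piv U Lam α μ lam2 P (What, bhat) * P = 0 := by
          apply (forall_inner_zero _).mp
          intro D
          rw [← grad_W X A Piv U Lam α μ lam2 lam3 P (What, bhat) D]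
          exact h (D, 0)
        rw [hFE, Matrix.sub_mul, sub_eq_zero, Matrix.mul_assoc] at hFP
        rw [← Matrix.mul_assoc, ← hFP, Matrix.mul_assoc,
          Matrix.mul_inv_of_invertible, Matrix.mul_one]
      · -- system equation 2
        have hu : Pᵀ *ᵥ uvecDef X A Piv α lam3 P (What, bhat) = 0 := by
          apply (forall_dot_zero _).mp
          intro d
          rw [← grad_b X A Piv U Lam α μ lam2 lam3 P (What, bhat) d]
          exact h (0, d)
        rw [huE, Matrix.mulVec_sub, sub_eq_zero, Matrix.mulVec_mulVec] at hu
        have hc : α • ((X *ᵥ (fun _ => 1)) ᵥ* What) + ((n:ℝ) * α + lam3) • bhat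
            = (Pᵀ * P)⁻¹ *ᵥ (Pᵀ *ᵥ ((fun _ => (1:ℝ))
                ᵥ* (Matrix.of fun i j => α * A i j - Piv i j - α))) := by
          rw [← hu, Matrix.mulVec_mulVec, Matrix.inv_mul_of_invertible, Matrix.one_mulVec]
        have hTsym : (Pᵀ * P)ᵀ = Pᵀ * P := by
          rw [Matrix.transpose_mul, Matrix.transpose_transpose]
        have hQr : ((fun _ => (1:ℝ)) ᵥ* (Matrix.of fun i j => α * A i j - Piv i j - α))
              ᵥ* (P * (Pᵀ * P)⁻¹)
            = (Pᵀ * P)⁻¹ *ᵥ (Pᵀ *ᵥ ((fun _ => (1:ℝ))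
                ᵥ* (Matrix.of fun i j => α * A i j - Piv i j - α))) := by
          rw [← Matrix.vecMul_vecMul, vecMul_eq _ P, vecMul_eq _ ((Pᵀ * P)⁻¹),
            Matrix.transpose_nonsing_inv, hTsym]
        intro j
        have hcj : α * (∑ i, (∑ k, X i k) * What i j) + ((n : ℝ) * α + lam3) * bhat j
            = (α • ((X *ᵥ (fun _ => 1)) ᵥ* What) + ((n:ℝ) * α + lam3) • bhat) j := by
          simp [Matrix.vecMul, Matrix.mulVec, dotProduct]
        have hrj : ∑ jj, (∑ i, (Matrix.of fun i j => α * A i j - Piv i j - α) i jj)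
              * (P * (Pᵀ * P)⁻¹) jj j
            = (((fun _ => (1:ℝ)) ᵥ* (Matrix.of fun i j => α * A i j - Piv i j - α))
              ᵥ* (P * (Pᵀ * P)⁻¹)) j := by
          simp [Matrix.vecMul, dotProduct]
        rw [hcj, hrj, hQr, hc]
    · rintro ⟨h1, h2⟩ y
      -- reconstruct the two vanishing conditions
      have hFP : Fmat X A Piv U Lam α μ lam2 P (What, bhat) * P = 0 := by
        rw [hFE, Matrix.sub_mul, sub_eq_zero, Matrix.mul_assoc, h1,
          Matrix.mul_assoc, Matrix.mul_assoc, Matrix.inv_mul_of_invertible,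
          Matrix.mul_one]
      have hTsym : (Pᵀ * P)ᵀ = Pᵀ * P := by
        rw [Matrix.transpose_mul, Matrix.transpose_transpose]
      have hQr : ((fun _ => (1:ℝ)) ᵥ* (Matrix.of fun i j => α * A i j - Piv i j - α))
            ᵥ* (P * (Pᵀ * P)⁻¹)
          = (Pᵀ * P)⁻¹ *ᵥ (Pᵀ *ᵥ ((fun _ => (1:ℝ))
              ᵥ* (Matrix.of fun i j => α * A i j - Piv i j - α))) := by
        rw [← Matrix.vecMul_vecMul, vecMul_eq _ P, vecMul_eq _ ((Pᵀ * P)⁻¹),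
            Matrix.transpose_nonsing_inv, hTsym]
      have hcv : α • ((X *ᵥ (fun _ => 1)) ᵥ* What) + ((n:ℝ) * α + lam3) • bhat
          = ((fun _ => (1:ℝ)) ᵥ* (Matrix.of fun i j => α * A i j - Piv i j - α))
            ᵥ* (P * (Pᵀ * P)⁻¹) := by
        funext j
        have hcj : (α • ((X *ᵥ (fun _ => 1)) ᵥ* What) + ((n:ℝ) * α + lam3) • bhat) j
            = α * (∑ i, (∑ k, X i k) * What i j) + ((n : ℝ) * α + lam3) * bhat j := by
          simp [Matrix.vecMul, Matrix.mulVec, dotProduct]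
        have hrj : (((fun _ => (1:ℝ)) ᵥ* (Matrix.of fun i j => α * A i j - Piv i j - α))
              ᵥ* (P * (Pᵀ * P)⁻¹)) j
            = ∑ jj, (∑ i, (Matrix.of fun i j => α * A i j - Piv i j - α) i jj)
              * (P * (Pᵀ * P)⁻¹) jj j := by
          simp [Matrix.vecMul, dotProduct]
        rw [hcj, hrj]
        exact h2 j
      have hu : Pᵀ *ᵥ uvecDef X A Piv α lam3 P (What, bhat) = 0 := by
        rw [huE, Matrix.mulVec_sub, sub_eq_zero, Matrix.mulVec_mulVec, hcv, hQr,
          Matrix.mulVec_mulVec, Matrix.mul_inv_of_invertible, Matrix.one_mulVec]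
      rw [Df_split X A Piv U Lam α μ lam2 lam3 P (What, bhat) y,
        grad_W X A Piv U Lam α μ lam2 lam3 P (What, bhat) y.1,
        grad_b X A Piv U Lam α μ lam2 lam3 P (What, bhat) y.2,
        hFP, hu]
      simp
end

section
/- Let q ∈ {2, ∞}. Consider the splitting of the ℓ_q-row-norm regularized MSVM: minimize F₂(W,b,A,U,V) = (1/n)Σ_{i,j} c_{ij}[a_{ij}]₊ + λ₁‖U‖₁ + λ₂ Σ_{j=1}^p ‖v^j‖_q + (λ₃/2)‖b‖₂² subject to A = XᵀW + e bᵀ + E, U = W, V = W, We = 0, eᵀ b = 0, with λ₁, λ₂ ≥ 0, λ₃ > 0, c_{ij} = I(y_i ≠ j), and assume this problem has an optimal solution with optimal value F₂* together with corresponding optimal Lagrange multipliers (a saddle point of the Lagrangian). Let α, μ, ν > 0 and define the augmented Lagrangian L₂(W,b,A,U,V,Π,Λ,Γ) = (1/n)Σ_{i,j} c_{ij}[a_{ij}]₊ + λ₁‖U‖₁ + λ₂ Σ_j ‖v^j‖_q + (λ₃/2)‖b‖₂² + ⟨Π, XᵀW + e bᵀ − A + E⟩ + (α/2)‖XᵀW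 + e bᵀ − A + E‖_F² + ⟨Λ, W − U⟩ + (μ/2)‖W − U‖_F² + ⟨Γ, W − V⟩ + (ν/2)‖W − V‖_F². Suppose the sequence (W^k, b^k, A^k, U^k, V^k, Π^k, Λ^k, Γ^k) satisfies, for every k: (W^{k+1}, b^{k+1}) minimizes L₂(·,·,A^k,U^k,V^k,Π^k,Λ^k,Γ^k) over {(W,b) : We = 0, eᵀb = 0}; (A^{k+1}, U^{k+1}, V^{k+1}) minimizes L₂(W^{k+1},b^{k+1},·,·,·,Π^k,Λ^k,Γ^k); Π^{k+1} = Π^k + α(XᵀW^{k+1} + e(b^{k+1})ᵀ − A^{k+1} + E); Λ^{k+1} = Λ^k + μ(W^{k+1} − U^{k+1}); and Γ^{k+1} = Γ^k + ν(W^{k+1} − V^{k+1}). Then F₂(W^k,b^k,A^k,U^k,V^k) → F₂*, and ‖XᵀW^k + e(b^k)ᵀ + E − A^k‖_F → 0, ‖W^k − U^k‖_F → 0, and ‖W^k − V^k‖_F → 0 as k → ∞. -/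
open Matrix Filter

open RealInnerProductSpace Set Topology

/-!
Rescaling the three blocks of the constraint by `√α, √μ, √ν` (and the multipliers by the inverse
factors) turns (13) into the standard two-block ADMM with unit penalty for
`min f x + g z` subject to `G x = z` in one Euclidean space, where `f` is the ridge term in `b`,
`g` collects the loss and the penalties on `(A, U, V)`, and `G` is affine.
For that scheme the classical argument applies. The optimality conditions of the two
subproblems and the saddle point show that `‖Y - Y⋆‖² + ‖z - z⋆‖²` drops at every step by at
least `‖G x - z‖² + ‖z^{k+1} - z^k‖²`. Hence both quantities are summable and the iterates are
bounded, and the objective is squeezed between `p⋆ - ⟪Y⋆, r⟫` and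
`p⋆ - ⟪Y^{k+1}, r⟫ - ⟪z^{k+1} - z^k, r + z^{k+1} - z⋆⟫`, where `r` is the residual.
-/

theorem nonneg_of_forall_mul_add_sq_mul_nonneg {L Q : ℝ}
    (h : ∀ t : ℝ, 0 < t → t ≤ 1 → 0 ≤ t * L + t ^ 2 * Q) : 0 ≤ L := by
  have hlim : Tendsto (fun t => L + t * Q) (𝓝[>] 0) (𝓝 L) := by
    have : Continuous fun t : ℝ => L + t * Q := by fun_prop
    simpa using (this.tendsto 0).mono_left nhdsWithin_le_nhds
  refine ge_of_tendsto hlim ?_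
  filter_upwards [Ioc_mem_nhdsGT one_pos] with t ⟨ht0, ht1⟩
  have := h t ht0 ht1
  rw [show t * L + t ^ 2 * Q = t * (L + t * Q) by ring] at this
  exact (mul_nonneg_iff_of_pos_left ht0).1 this

theorem summable_of_add_le {V a : ℕ → ℝ} (hV : ∀ k, 0 ≤ V k) (ha : ∀ k, 0 ≤ a k)
    (h : ∀ k, V (k + 1) + a k ≤ V k) : Summable a := by
  have hpartial : ∀ K, ∑ k ∈ Finset.range K, a k + V K ≤ V 0 := by
    intro K
    induction K with
    | zero => simp
    | succ K ih => rw [Finset.sum_range_succ]; linarith [h K]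
  exact summable_of_sum_range_le ha fun K => by linarith [hpartial K, hV K]

theorem tendsto_zero_of_sq_le {u a : ℕ → ℝ} (h : ∀ k, u k ^ 2 ≤ a k)
    (ha : Tendsto a atTop (𝓝 0)) (hu : ∀ k, 0 ≤ u k) : Tendsto u atTop (𝓝 0) :=
  squeeze_zero hu (fun k => Real.le_sqrt_of_sq_le (h k)) (by simpa using ha.sqrt)

theorem tendsto_sqrt_zero_of_mul_le {c : ℝ} {S R : ℕ → ℝ} (hc : 0 < c) (hS : ∀ k, 0 ≤ S k)
    (h : ∀ k, c * S k ≤ R k ^ 2) (hR : Tendsto R atTop (𝓝 0)) :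
    Tendsto (fun k => √(S k)) atTop (𝓝 0) :=
  tendsto_zero_of_sq_le (a := fun k => R k ^ 2 / c)
    (fun k => by rw [Real.sq_sqrt (hS k), le_div_iff₀ hc]; linarith [h k])
    (by simpa using (hR.pow 2).div_const c) fun _ => Real.sqrt_nonneg _

section ADMM

variable {E H : Type*} [AddCommGroup E] [Module ℝ E] [NormedAddCommGroup H] [InnerProductSpace ℝ H]

theorem ConvexOn.le_add_inner_of_isMinOn {C : Set E} {f : E → ℝ} (hf : ConvexOn ℝ C f)
    (G : E →ᵃ[ℝ] H) (Y : H) {x₀ x : E}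
    (hmin : IsMinOn (fun x => f x + ⟪Y, G x⟫ + 1 / 2 * ‖G x‖ ^ 2) C x₀) (hx₀ : x₀ ∈ C)
    (hx : x ∈ C) :
    f x₀ ≤ f x + ⟪Y + G x₀, G x - G x₀⟫ := by
  suffices 0 ≤ f x - f x₀ + ⟪Y + G x₀, G x - G x₀⟫ by linarith
  refine nonneg_of_forall_mul_add_sq_mul_nonneg (Q := 1 / 2 * ‖G x - G x₀‖ ^ 2) fun t ht0 ht1 => ?_
  have hmem : AffineMap.lineMap x₀ x t ∈ C := hf.1.lineMap_mem hx₀ hx ⟨ht0.le, ht1⟩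
  have hconv : f (AffineMap.lineMap x₀ x t) ≤ (1 - t) * f x₀ + t * f x := by
    simpa [AffineMap.lineMap_apply_module] using
      hf.2 hx₀ hx (by linarith : (0 : ℝ) ≤ 1 - t) ht0.le (by ring)
  have hG : G (AffineMap.lineMap x₀ x t) = G x₀ + t • (G x - G x₀) := by
    rw [G.apply_lineMap, AffineMap.lineMap_apply_module', add_comm]
  have := isMinOn_iff.1 hmin _ hmem
  simp only [hG, inner_add_right, inner_smul_right, norm_add_sq_real, norm_smul,
    Real.norm_eq_abs, mul_pow, sq_abs] at this
  rw [inner_add_left]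
  linarith

theorem tendsto_inner_zero_of_norm_le {l : Filter ℕ} {u v : ℕ → H} {M : ℝ}
    (hu : ∀ᶠ k in l, ‖u k‖ ≤ M) (hv : Tendsto (fun k => ‖v k‖) l (𝓝 0)) :
    Tendsto (fun k => ⟪u k, v k⟫) l (𝓝 0) := by
  refine squeeze_zero_norm' ?_ (by simpa using hv.const_mul M)
  filter_upwards [hu] with k hk
  exact (norm_inner_le_norm _ _).trans (mul_le_mul_of_nonneg_right hk (norm_nonneg _))

noncomputable def augLagrangian (f : E → ℝ) (g : H → ℝ) (G : E →ᵃ[ℝ] H) (x : E) (z Y : H) : ℝ :=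
  f x + g z + ⟪Y, G x - z⟫ + 1 / 2 * ‖G x - z‖ ^ 2

structure IsLagrangianSaddle (C : Set E) (f : E → ℝ) (g : H → ℝ) (G : E →ᵃ[ℝ] H)
    (xs : E) (zs Ys : H) : Prop where
  mem : xs ∈ C
  feasible : G xs = zs
  le_lagrangian : ∀ x ∈ C, ∀ z, f xs + g zs ≤ f x + g z + ⟪Ys, G x - z⟫

structure IsADMMSeq (C : Set E) (f : E → ℝ) (g : H → ℝ) (G : E →ᵃ[ℝ] H)
    (x : ℕ → E) (z Y : ℕ → H) : Prop where
  mem : ∀ k, x (k + 1) ∈ C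
  isMinOn_x : ∀ k, IsMinOn (augLagrangian f g G · (z k) (Y k)) C (x (k + 1))
  isMinOn_z : ∀ k, IsMinOn (augLagrangian f g G (x (k + 1)) · (Y k)) univ (z (k + 1))
  dual_update : ∀ k, Y (k + 1) = Y k + (G (x (k + 1)) - z (k + 1))

namespace IsADMMSeq

variable {C : Set E} {f : E → ℝ} {g : H → ℝ} {G : E →ᵃ[ℝ] H} {x : ℕ → E} {z Y : ℕ → H}
  {xs : E} {zs Ys : H}

theorem f_le_add_inner (h : IsADMMSeq C f g G x z Y) (hf : ConvexOn ℝ C f) (k : ℕ) {x' : E}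
    (hx' : x' ∈ C) :
    f (x (k + 1)) ≤ f x' + ⟪Y (k + 1) + (z (k + 1) - z k), G x' - G (x (k + 1))⟫ := by
  have hmin : IsMinOn (fun x => f x + ⟪Y k, (G - AffineMap.const ℝ E (z k)) x⟫
      + 1 / 2 * ‖(G - AffineMap.const ℝ E (z k)) x‖ ^ 2) C (x (k + 1)) :=
    isMinOn_iff.2 fun w hw => by
      have := isMinOn_iff.1 (h.isMinOn_x k) w hw
      simp only [augLagrangian] at this
      simp only [AffineMap.coe_sub, AffineMap.coe_const, Pi.sub_apply, Function.const_apply]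
      linarith
  have key := hf.le_add_inner_of_isMinOn _ _ hmin (h.mem k) hx'
  simp only [AffineMap.coe_sub, AffineMap.coe_const, Pi.sub_apply, Function.const_apply,
    sub_sub_sub_cancel_right] at key
  convert key using 3
  rw [h.dual_update k]
  abel

theorem g_le_add_inner (h : IsADMMSeq C f g G x z Y) (hg : ConvexOn ℝ univ g) (k : ℕ) (z' : H) :
    g (z (k + 1)) ≤ g z' + ⟪Y (k + 1), z (k + 1) - z'⟫ := by
  set G' : H →ᵃ[ℝ] H := AffineMap.const ℝ H (G (x (k + 1))) - AffineMap.id ℝ H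
  have hG' : ∀ w, G' w = G (x (k + 1)) - w := fun _ => rfl
  have hmin : IsMinOn (fun w => g w + ⟪Y k, G' w⟫ + 1 / 2 * ‖G' w‖ ^ 2) univ (z (k + 1)) :=
    isMinOn_univ_iff.2 fun w => by
      have := isMinOn_univ_iff.1 (h.isMinOn_z k) w
      simp only [augLagrangian] at this
      simp only [hG']
      linarith
  have key := hg.le_add_inner_of_isMinOn G' (Y k) hmin (mem_univ _) (mem_univ z')
  rwa [hG', hG', sub_sub_sub_cancel_left, ← h.dual_update k] at key

/-- `Y (k + 1)` is a subgradient of `g` at `z (k + 1)`, so this is monotonicity of `∂g`. -/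
theorem inner_residual_sub_nonneg (h : IsADMMSeq C f g G x z Y) (hg : ConvexOn ℝ univ g)
    (k : ℕ) : 0 ≤ ⟪G (x (k + 2)) - z (k + 2), z (k + 2) - z (k + 1)⟫ := by
  have h₁ := h.g_le_add_inner hg (k + 1) (z (k + 1))
  have h₂ := h.g_le_add_inner hg k (z (k + 2))
  rw [h.dual_update (k + 1), inner_add_left] at h₁
  rw [← neg_sub, inner_neg_right] at h₂
  linarith

theorem le_objective (hs : IsLagrangianSaddle C f g G xs zs Ys) (h : IsADMMSeq C f g G x z Y)
    (k : ℕ) : f xs + g zs - ⟪Ys, G (x (k + 1)) - z (k + 1)⟫ ≤ f (x (k + 1)) + g (z (k + 1)) := by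
  linarith [hs.le_lagrangian _ (h.mem k) (z (k + 1))]

theorem objective_le (hs : IsLagrangianSaddle C f g G xs zs Ys) (h : IsADMMSeq C f g G x z Y)
    (hf : ConvexOn ℝ C f) (hg : ConvexOn ℝ univ g) (k : ℕ) :
    f (x (k + 1)) + g (z (k + 1)) ≤ f xs + g zs - ⟪Y (k + 1), G (x (k + 1)) - z (k + 1)⟫
      - ⟪z (k + 1) - z k, G (x (k + 1)) - z (k + 1) + (z (k + 1) - zs)⟫ := by
  have h₁ := h.f_le_add_inner hf k hs.mem
  have h₂ := h.g_le_add_inner hg k zs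
  rw [hs.feasible] at h₁
  simp only [inner_add_left, inner_add_right, inner_sub_left, inner_sub_right] at h₁ h₂ ⊢
  linarith

theorem lyapunov_le (hs : IsLagrangianSaddle C f g G xs zs Ys) (h : IsADMMSeq C f g G x z Y)
    (hf : ConvexOn ℝ C f) (hg : ConvexOn ℝ univ g) (k : ℕ) :
    ‖Y (k + 2) - Ys‖ ^ 2 + ‖z (k + 2) - zs‖ ^ 2
        + (‖G (x (k + 2)) - z (k + 2)‖ ^ 2 + ‖z (k + 2) - z (k + 1)‖ ^ 2)
      ≤ ‖Y (k + 1) - Ys‖ ^ 2 + ‖z (k + 1) - zs‖ ^ 2 := by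
  have hY : Y (k + 1) - Ys = (Y (k + 2) - Ys) - (G (x (k + 2)) - z (k + 2)) := by
    rw [h.dual_update (k + 1)]; abel
  have hz : z (k + 1) - zs = (z (k + 2) - zs) - (z (k + 2) - z (k + 1)) := by abel
  set r := G (x (k + 2)) - z (k + 2)
  set d := z (k + 2) - z (k + 1)
  have hlow : f xs + g zs - ⟪Ys, r⟫ ≤ f (x (k + 2)) + g (z (k + 2)) := h.le_objective hs (k + 1)
  have hup : f (x (k + 2)) + g (z (k + 2)) ≤ f xs + g zs - ⟪Y (k + 2), r⟫
      - ⟪d, r + (z (k + 2) - zs)⟫ := h.objective_le hs hf hg (k + 1)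
  have hcross : 0 ≤ ⟪r, d⟫ := h.inner_residual_sub_nonneg hg k
  have hdescent : ⟪Y (k + 2) - Ys, r⟫ + ⟪z (k + 2) - zs, d⟫ ≤ 0 := by
    rw [inner_add_right] at hup
    rw [inner_sub_left]
    linarith [real_inner_comm d (z (k + 2) - zs), real_inner_comm r d]
  rw [hY, hz, norm_sub_sq_real (Y (k + 2) - Ys), norm_sub_sq_real (z (k + 2) - zs)]
  linarith

theorem lyapunov_antitone (hs : IsLagrangianSaddle C f g G xs zs Ys)
    (h : IsADMMSeq C f g G x z Y) (hf : ConvexOn ℝ C f) (hg : ConvexOn ℝ univ g) :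
    Antitone fun k => ‖Y (k + 1) - Ys‖ ^ 2 + ‖z (k + 1) - zs‖ ^ 2 :=
  antitone_nat_of_succ_le fun k =>
    (le_add_of_nonneg_right (by positivity)).trans (h.lyapunov_le hs hf hg k)

theorem tendsto_residual (hs : IsLagrangianSaddle C f g G xs zs Ys) (h : IsADMMSeq C f g G x z Y)
    (hf : ConvexOn ℝ C f) (hg : ConvexOn ℝ univ g) :
    Tendsto (fun k => ‖G (x k) - z k‖) atTop (𝓝 0) ∧
      Tendsto (fun k => ‖z (k + 1) - z k‖) atTop (𝓝 0) := by
  have hdecay := (summable_of_add_le (V := fun k => ‖Y (k + 1) - Ys‖ ^ 2 + ‖z (k + 1) - zs‖ ^ 2)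
    (fun _ => by positivity) (fun _ => by positivity) (h.lyapunov_le hs hf hg)).tendsto_atTop_zero
  exact ⟨(tendsto_add_atTop_iff_nat 2).1 <| tendsto_zero_of_sq_le
      (fun _ => le_add_of_nonneg_right (sq_nonneg _)) hdecay fun _ => norm_nonneg _,
    (tendsto_add_atTop_iff_nat 1).1 <| tendsto_zero_of_sq_le
      (fun _ => le_add_of_nonneg_left (sq_nonneg _)) hdecay fun _ => norm_nonneg _⟩

theorem tendsto (hs : IsLagrangianSaddle C f g G xs zs Ys) (h : IsADMMSeq C f g G x z Y)
    (hf : ConvexOn ℝ C f) (hg : ConvexOn ℝ univ g) :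
    Tendsto (fun k => f (x k) + g (z k)) atTop (𝓝 (f xs + g zs)) ∧
      Tendsto (fun k => ‖G (x k) - z k‖) atTop (𝓝 0) := by
  obtain ⟨hr, hdz⟩ := h.tendsto_residual hs hf hg
  have hr₁ := (tendsto_add_atTop_iff_nat 1).2 hr
  have hV := fun k : ℕ => h.lyapunov_antitone hs hf hg k.zero_le
  set M := √(‖Y 1 - Ys‖ ^ 2 + ‖z 1 - zs‖ ^ 2)
  have hY : ∀ k, ‖Y (k + 1)‖ ≤ ‖Ys‖ + M := fun k =>
    (norm_le_norm_add_norm_sub' _ Ys).trans <| add_le_add_right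
      (Real.le_sqrt_of_sq_le <| (le_add_of_nonneg_right (sq_nonneg _)).trans (hV k)) _
  have hz : ∀ᶠ k in atTop, ‖G (x (k + 1)) - z (k + 1) + (z (k + 1) - zs)‖ ≤ 1 + M := by
    filter_upwards [hr₁.eventually (ge_mem_nhds one_pos)] with k hk
    exact (norm_add_le _ _).trans <| add_le_add hk
      (Real.le_sqrt_of_sq_le <| (le_add_of_nonneg_left (sq_nonneg _)).trans (hV k))
  have hlow : Tendsto (fun k => f xs + g zs - ⟪Ys, G (x (k + 1)) - z (k + 1)⟫) atTop
      (𝓝 (f xs + g zs)) := by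
    simpa using tendsto_const_nhds.sub
      (tendsto_inner_zero_of_norm_le (Eventually.of_forall fun _ => le_rfl) hr₁)
  have hup : Tendsto (fun k => f xs + g zs - ⟪Y (k + 1), G (x (k + 1)) - z (k + 1)⟫
      - ⟪z (k + 1) - z k, G (x (k + 1)) - z (k + 1) + (z (k + 1) - zs)⟫) atTop
      (𝓝 (f xs + g zs)) := by
    simpa using (tendsto_const_nhds.sub
      (tendsto_inner_zero_of_norm_le (Eventually.of_forall hY) hr₁)).sub
      ((tendsto_inner_zero_of_norm_le hz hdz).congr fun _ => real_inner_comm _ _)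
  refine ⟨(tendsto_add_atTop_iff_nat 1).1 ?_, hr⟩
  exact tendsto_of_tendsto_of_tendsto_of_le_of_le hlow hup (h.le_objective hs)
    (h.objective_le hs hf hg)

end IsADMMSeq

end ADMM

abbrev StackSpace (m r κ : Type*) [Fintype m] [Fintype r] [Fintype κ] :=
  EuclideanSpace ℝ ((m × κ) ⊕ (r × κ) ⊕ (r × κ))

section Stack

variable {m r κ : Type*} [Fintype m] [Fintype r] [Fintype κ]

noncomputable def weightedStack (a b c : ℝ) :
    Matrix m κ ℝ × Matrix r κ ℝ × Matrix r κ ℝ →ₗ[ℝ] StackSpace m r κ where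
  toFun t := WithLp.toLp 2 (Sum.elim (fun q => a * t.1 q.1 q.2)
    (Sum.elim (fun q => b * t.2.1 q.1 q.2) (fun q => c * t.2.2 q.1 q.2)))
  map_add' t t' := by ext (q | q | q) <;> simp [mul_add]
  map_smul' s t := by ext (q | q | q) <;> simp [mul_left_comm]

noncomputable def weightedUnstack (a b c : ℝ) :
    StackSpace m r κ →ₗ[ℝ] Matrix m κ ℝ × Matrix r κ ℝ × Matrix r κ ℝ where
  toFun z := (Matrix.of fun i j => a * z (Sum.inl (i, j)),
    Matrix.of fun i j => b * z (Sum.inr (Sum.inl (i, j))),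
    Matrix.of fun i j => c * z (Sum.inr (Sum.inr (i, j))))
  map_add' z z' := by ext <;> simp [mul_add]
  map_smul' s z := by ext <;> simp [mul_left_comm]

variable {a b c : ℝ}

theorem weightedStack_weightedUnstack (ha : a ≠ 0) (hb : b ≠ 0) (hc : c ≠ 0)
    (z : StackSpace m r κ) : weightedStack a b c (weightedUnstack a⁻¹ b⁻¹ c⁻¹ z) = z := by
  ext (q | q | q) <;> simp [weightedStack, weightedUnstack, ha, hb, hc]

theorem weightedUnstack_weightedStack (ha : a ≠ 0) (hb : b ≠ 0) (hc : c ≠ 0)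
    (t : Matrix m κ ℝ × Matrix r κ ℝ × Matrix r κ ℝ) :
    weightedUnstack a⁻¹ b⁻¹ c⁻¹ (weightedStack a b c t) = t := by
  ext <;> simp [weightedStack, weightedUnstack, ha, hb, hc]

theorem inner_weightedStack (a' b' c' : ℝ) (t t' : Matrix m κ ℝ × Matrix r κ ℝ × Matrix r κ ℝ) :
    ⟪weightedStack a b c t, weightedStack a' b' c' t'⟫ =
      a * a' * ∑ i, ∑ j, t.1 i j * t'.1 i j + b * b' * ∑ i, ∑ j, t.2.1 i j * t'.2.1 i j
        + c * c' * ∑ i, ∑ j, t.2.2 i j * t'.2.2 i j := by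
  simp only [weightedStack, LinearMap.coe_mk, AddHom.coe_mk, PiLp.inner_apply,
    Fintype.sum_sum_type, Fintype.sum_prod_type, Sum.elim_inl, Sum.elim_inr, Finset.mul_sum,
    RCLike.inner_apply, conj_trivial, ← add_assoc]
  refine congrArg₂ (· + ·) (congrArg₂ (· + ·) ?_ ?_) ?_ <;>
    exact Finset.sum_congr rfl fun _ _ => Finset.sum_congr rfl fun _ _ => by ring

end Stack

section MSVM

variable {n p J : ℕ} (X : Matrix (Fin p) (Fin n) ℝ) (y : Fin n → Fin J)
  (rnrm : (Fin J → ℝ) → ℝ) (lam1 lam2 lam3 α μ ν : ℝ)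

def msvmAffine (W : Matrix (Fin p) (Fin J) ℝ) (b : Fin J → ℝ) : Matrix (Fin n) (Fin J) ℝ :=
  Matrix.of fun i j => (∑ g, X g i * W g j) + b j + 1

def msvmFeasible : Set (Matrix (Fin p) (Fin J) ℝ × (Fin J → ℝ)) :=
  {x | (∀ g, ∑ j, x.1 g j = 0) ∧ ∑ j, x.2 j = 0}

noncomputable def msvmLoss (A : Matrix (Fin n) (Fin J) ℝ) (U V : Matrix (Fin p) (Fin J) ℝ) : ℝ :=
  (1 / (n : ℝ)) * (∑ i, ∑ j, (if y i ≠ j then 1 else 0) * max (A i j) 0)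
    + lam1 * (∑ g, ∑ j, |U g j|) + lam2 * (∑ g, rnrm (fun j => V g j))

noncomputable def msvmLagrangian (W : Matrix (Fin p) (Fin J) ℝ) (b : Fin J → ℝ)
    (A : Matrix (Fin n) (Fin J) ℝ) (U V : Matrix (Fin p) (Fin J) ℝ)
    (P : Matrix (Fin n) (Fin J) ℝ) (L Γ : Matrix (Fin p) (Fin J) ℝ) : ℝ :=
  msvmLoss y rnrm lam1 lam2 A U V + lam3 / 2 * ∑ j, b j ^ 2
    + (∑ i, ∑ j, P i j * (msvmAffine X W b i j - A i j))
    + (∑ g, ∑ j, L g j * (W g j - U g j)) + (∑ g, ∑ j, Γ g j * (W g j - V g j))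

noncomputable def msvmAugLagrangian (W : Matrix (Fin p) (Fin J) ℝ) (b : Fin J → ℝ)
    (A : Matrix (Fin n) (Fin J) ℝ) (U V : Matrix (Fin p) (Fin J) ℝ)
    (P : Matrix (Fin n) (Fin J) ℝ) (L Γ : Matrix (Fin p) (Fin J) ℝ) : ℝ :=
  msvmLagrangian X y rnrm lam1 lam2 lam3 W b A U V P L Γ
    + α / 2 * (∑ i, ∑ j, (msvmAffine X W b i j - A i j) ^ 2)
    + μ / 2 * (∑ g, ∑ j, (W g j - U g j) ^ 2) + ν / 2 * (∑ g, ∑ j, (W g j - V g j) ^ 2)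

noncomputable def msvmF (x : Matrix (Fin p) (Fin J) ℝ × (Fin J → ℝ)) : ℝ :=
  lam3 / 2 * ∑ j, x.2 j ^ 2

noncomputable def msvmG (z : StackSpace (Fin n) (Fin p) (Fin J)) : ℝ :=
  let t := weightedUnstack (√α)⁻¹ (√μ)⁻¹ (√ν)⁻¹ z
  msvmLoss y rnrm lam1 lam2 t.1 t.2.1 t.2.2

noncomputable def msvmPrimal (A : Matrix (Fin n) (Fin J) ℝ) (U V : Matrix (Fin p) (Fin J) ℝ) :
    StackSpace (Fin n) (Fin p) (Fin J) :=
  weightedStack √α √μ √ν (A, U, V)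

noncomputable def msvmDual (P : Matrix (Fin n) (Fin J) ℝ) (L Γ : Matrix (Fin p) (Fin J) ℝ) :
    StackSpace (Fin n) (Fin p) (Fin J) :=
  weightedStack (√α)⁻¹ (√μ)⁻¹ (√ν)⁻¹ (P, L, Γ)

noncomputable def msvmMap :
    Matrix (Fin p) (Fin J) ℝ × (Fin J → ℝ) →ᵃ[ℝ] StackSpace (Fin n) (Fin p) (Fin J) where
  toFun x := msvmPrimal α μ ν (msvmAffine X x.1 x.2) x.1 x.1
  linear := weightedStack √α √μ √ν ∘ₗ
    { toFun := fun x => (Matrix.of fun i j => (∑ g, X g i * x.1 g j) + x.2 j, x.1, x.1)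
      map_add' := fun x x' => by
        ext <;> simp [mul_add, Finset.sum_add_distrib, add_add_add_comm]
      map_smul' := fun s x => by
        ext <;> simp [mul_left_comm, ← Finset.mul_sum, mul_add] }
  map_vadd' x v := by
    simp only [msvmPrimal, vadd_eq_add, LinearMap.coe_comp, LinearMap.coe_mk, AddHom.coe_mk,
      Function.comp_apply, ← map_add]
    congr 1
    ext <;> simp [msvmAffine, mul_add, Finset.sum_add_distrib]
    ring

end MSVM

section MSVMLemmas

variable {n p J : ℕ} {X : Matrix (Fin p) (Fin n) ℝ} {y : Fin n → Fin J}
  {rnrm : (Fin J → ℝ) → ℝ} {lam1 lam2 lam3 α μ ν : ℝ}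

theorem msvmMap_apply (W : Matrix (Fin p) (Fin J) ℝ) (b : Fin J → ℝ) :
    msvmMap X α μ ν (W, b) = msvmPrimal α μ ν (msvmAffine X W b) W W := rfl

theorem msvmPrimal_weightedUnstack (hα : 0 < α) (hμ : 0 < μ) (hν : 0 < ν)
    (z : StackSpace (Fin n) (Fin p) (Fin J)) :
    msvmPrimal α μ ν (weightedUnstack (√α)⁻¹ (√μ)⁻¹ (√ν)⁻¹ z).1
      (weightedUnstack (√α)⁻¹ (√μ)⁻¹ (√ν)⁻¹ z).2.1 (weightedUnstack (√α)⁻¹ (√μ)⁻¹ (√ν)⁻¹ z).2.2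
      = z :=
  weightedStack_weightedUnstack (by positivity) (by positivity) (by positivity) z

theorem msvmG_msvmPrimal (hα : 0 < α) (hμ : 0 < μ) (hν : 0 < ν)
    (A : Matrix (Fin n) (Fin J) ℝ) (U V : Matrix (Fin p) (Fin J) ℝ) :
    msvmG y rnrm lam1 lam2 α μ ν (msvmPrimal α μ ν A U V) = msvmLoss y rnrm lam1 lam2 A U V := by
  simp only [msvmG, msvmPrimal, weightedUnstack_weightedStack (Real.sqrt_ne_zero'.2 hα)
    (Real.sqrt_ne_zero'.2 hμ) (Real.sqrt_ne_zero'.2 hν)]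

theorem msvmF_add_msvmG (hα : 0 < α) (hμ : 0 < μ) (hν : 0 < ν) (W : Matrix (Fin p) (Fin J) ℝ)
    (b : Fin J → ℝ) (A : Matrix (Fin n) (Fin J) ℝ) (U V : Matrix (Fin p) (Fin J) ℝ) :
    msvmF lam3 (W, b) + msvmG y rnrm lam1 lam2 α μ ν (msvmPrimal α μ ν A U V) =
      msvmLoss y rnrm lam1 lam2 A U V + lam3 / 2 * ∑ j, b j ^ 2 := by
  rw [msvmG_msvmPrimal hα hμ hν, msvmF, add_comm]

theorem inner_msvmDual_sub (hα : 0 < α) (hμ : 0 < μ) (hν : 0 < ν)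
    (P A A' : Matrix (Fin n) (Fin J) ℝ) (L Γ U U' V V' : Matrix (Fin p) (Fin J) ℝ) :
    ⟪msvmDual α μ ν P L Γ, msvmPrimal α μ ν A U V - msvmPrimal α μ ν A' U' V'⟫ =
      ∑ i, ∑ j, P i j * (A i j - A' i j) + ∑ g, ∑ j, L g j * (U g j - U' g j)
        + ∑ g, ∑ j, Γ g j * (V g j - V' g j) := by
  rw [msvmDual, msvmPrimal, msvmPrimal, ← map_sub, inner_weightedStack,
    inv_mul_cancel₀ (Real.sqrt_ne_zero'.2 hα), inv_mul_cancel₀ (Real.sqrt_ne_zero'.2 hμ),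
    inv_mul_cancel₀ (Real.sqrt_ne_zero'.2 hν)]
  simp

theorem norm_msvmPrimal_sub_sq (hα : 0 ≤ α) (hμ : 0 ≤ μ) (hν : 0 ≤ ν)
    (A A' : Matrix (Fin n) (Fin J) ℝ) (U U' V V' : Matrix (Fin p) (Fin J) ℝ) :
    ‖msvmPrimal α μ ν A U V - msvmPrimal α μ ν A' U' V'‖ ^ 2 =
      α * ∑ i, ∑ j, (A i j - A' i j) ^ 2 + μ * ∑ g, ∑ j, (U g j - U' g j) ^ 2
        + ν * ∑ g, ∑ j, (V g j - V' g j) ^ 2 := by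
  rw [← real_inner_self_eq_norm_sq, msvmPrimal, msvmPrimal, ← map_sub, inner_weightedStack,
    Real.mul_self_sqrt hα, Real.mul_self_sqrt hμ, Real.mul_self_sqrt hν]
  simp [sq]

theorem msvmLagrangian_eq (hα : 0 < α) (hμ : 0 < μ) (hν : 0 < ν)
    (W : Matrix (Fin p) (Fin J) ℝ) (b : Fin J → ℝ) (A P : Matrix (Fin n) (Fin J) ℝ)
    (U V L Γ : Matrix (Fin p) (Fin J) ℝ) :
    msvmLagrangian X y rnrm lam1 lam2 lam3 W b A U V P L Γ =
      msvmF lam3 (W, b) + msvmG y rnrm lam1 lam2 α μ ν (msvmPrimal α μ ν A U V)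
        + ⟪msvmDual α μ ν P L Γ, msvmMap X α μ ν (W, b) - msvmPrimal α μ ν A U V⟫ := by
  rw [msvmMap_apply, inner_msvmDual_sub hα hμ hν, msvmG_msvmPrimal hα hμ hν, msvmLagrangian,
    msvmF]
  ring

theorem msvmAugLagrangian_eq (hα : 0 < α) (hμ : 0 < μ) (hν : 0 < ν)
    (W : Matrix (Fin p) (Fin J) ℝ) (b : Fin J → ℝ) (A P : Matrix (Fin n) (Fin J) ℝ)
    (U V L Γ : Matrix (Fin p) (Fin J) ℝ) :
    msvmAugLagrangian X y rnrm lam1 lam2 lam3 α μ ν W b A U V P L Γ =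
      augLagrangian (msvmF lam3) (msvmG y rnrm lam1 lam2 α μ ν) (msvmMap X α μ ν) (W, b)
        (msvmPrimal α μ ν A U V) (msvmDual α μ ν P L Γ) := by
  rw [augLagrangian, ← msvmLagrangian_eq hα hμ hν, msvmMap_apply,
    norm_msvmPrimal_sub_sq hα.le hμ.le hν.le, msvmAugLagrangian]
  ring

theorem msvmDual_update (hα : 0 < α) (hμ : 0 < μ) (hν : 0 < ν)
    (W : Matrix (Fin p) (Fin J) ℝ) (b : Fin J → ℝ) (A P : Matrix (Fin n) (Fin J) ℝ)
    (U V L Γ : Matrix (Fin p) (Fin J) ℝ) :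
    msvmDual α μ ν (Matrix.of fun i j => P i j + α * (msvmAffine X W b i j - A i j))
        (Matrix.of fun g j => L g j + μ * (W g j - U g j))
        (Matrix.of fun g j => Γ g j + ν * (W g j - V g j)) =
      msvmDual α μ ν P L Γ + (msvmMap X α μ ν (W, b) - msvmPrimal α μ ν A U V) := by
  rw [msvmMap_apply, msvmDual, msvmDual, msvmPrimal, msvmPrimal]
  ext (q | q | q) <;> simp [weightedStack] <;> field_simp <;>
    simp only [Real.sq_sqrt hα.le, Real.sq_sqrt hμ.le, Real.sq_sqrt hν.le]

theorem convexOn_rnrm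
    (hq : (∀ v : Fin J → ℝ, rnrm v = √(∑ j, v j ^ 2)) ∨ (∀ v : Fin J → ℝ, rnrm v = ⨆ j, |v j|)) :
    ConvexOn ℝ univ rnrm := by
  rcases hq with hq | hq
  · have : rnrm = fun v => ‖WithLp.toLp 2 v‖ := by
      ext v
      simp [hq, EuclideanSpace.norm_eq]
    rw [this]
    exact (convexOn_norm convex_univ).comp_linearMap
      (WithLp.linearEquiv 2 ℝ (Fin J → ℝ)).symm.toLinearMap
  · have : rnrm = fun v => ‖v‖ := by
      ext v
      rw [hq]
      refine le_antisymm (Real.iSup_le (fun j => norm_le_pi_norm v j) (norm_nonneg _)) ?_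
      exact (pi_norm_le_iff_of_nonneg (Real.iSup_nonneg fun j => abs_nonneg _)).2 fun j =>
        le_ciSup (f := fun j => |v j|) (Set.finite_range _).bddAbove j
    rw [this]
    exact convexOn_norm convex_univ

theorem convexOn_msvmLoss (hr : ConvexOn ℝ univ rnrm) (hlam1 : 0 ≤ lam1) (hlam2 : 0 ≤ lam2) :
    ConvexOn ℝ univ fun t : Matrix (Fin n) (Fin J) ℝ × Matrix (Fin p) (Fin J) ℝ ×
        Matrix (Fin p) (Fin J) ℝ => msvmLoss y rnrm lam1 lam2 t.1 t.2.1 t.2.2 := by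
  refine ⟨convex_univ, fun t _ t' _ a b ha hb hab => ?_⟩
  have hhinge : ∀ u v : ℝ, max (a * u + b * v) 0 ≤ a * max u 0 + b * max v 0 := fun u v =>
    max_le (by gcongr <;> exact le_max_left _ _) (by positivity)
  have habs : ∀ u v : ℝ, |a * u + b * v| ≤ a * |u| + b * |v| := fun u v =>
    (abs_add_le _ _).trans_eq (by rw [abs_mul, abs_mul, abs_of_nonneg ha, abs_of_nonneg hb])
  have hrow : ∀ u v : Fin J → ℝ, rnrm (fun j => a * u j + b * v j) ≤ a * rnrm u + b * rnrm v :=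
    fun u v => hr.2 (mem_univ u) (mem_univ v) ha hb hab
  have h1 : ∑ i, ∑ j, (if y i ≠ j then 1 else 0) * max (a * t.1 i j + b * t'.1 i j) 0 ≤
      a * ∑ i, ∑ j, (if y i ≠ j then 1 else 0) * max (t.1 i j) 0
        + b * ∑ i, ∑ j, (if y i ≠ j then (1 : ℝ) else 0) * max (t'.1 i j) 0 := by
    simp only [Finset.mul_sum, ← Finset.sum_add_distrib]
    gcongr with i _ j _
    calc _ ≤ (if y i ≠ j then 1 else 0) * (a * max (t.1 i j) 0 + b * max (t'.1 i j) 0) := by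
          gcongr
          exact hhinge _ _
      _ = _ := by ring
  have h2 : ∑ g, ∑ j, |a * t.2.1 g j + b * t'.2.1 g j| ≤
      a * ∑ g, ∑ j, |t.2.1 g j| + b * ∑ g, ∑ j, |t'.2.1 g j| := by
    simp only [Finset.mul_sum, ← Finset.sum_add_distrib]
    gcongr with g _ j _
    exact habs _ _
  have h3 : ∑ g, rnrm (fun j => a * t.2.2 g j + b * t'.2.2 g j) ≤
      a * ∑ g, rnrm (fun j => t.2.2 g j) + b * ∑ g, rnrm (fun j => t'.2.2 g j) := by
    simp only [Finset.mul_sum, ← Finset.sum_add_distrib]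
    gcongr with g _
    exact hrow _ _
  simp only [msvmLoss, Prod.fst_add, Prod.snd_add, Prod.smul_fst, Prod.smul_snd,
    Matrix.add_apply, Matrix.smul_apply, smul_eq_mul]
  have hn : (0 : ℝ) ≤ 1 / n := by positivity
  nlinarith [mul_le_mul_of_nonneg_left h1 hn, mul_le_mul_of_nonneg_left h2 hlam1,
    mul_le_mul_of_nonneg_left h3 hlam2]

theorem convexOn_msvmG (hr : ConvexOn ℝ univ rnrm) (hlam1 : 0 ≤ lam1) (hlam2 : 0 ≤ lam2) :
    ConvexOn ℝ univ (msvmG (p := p) y rnrm lam1 lam2 α μ ν) :=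
  (convexOn_msvmLoss hr hlam1 hlam2).comp_linearMap (weightedUnstack (√α)⁻¹ (√μ)⁻¹ (√ν)⁻¹)

theorem convexOn_msvmF (hlam3 : 0 ≤ lam3) : ConvexOn ℝ univ (msvmF (p := p) (J := J) lam3) := by
  refine ⟨convex_univ, fun x _ x' _ a b ha hb hab => ?_⟩
  have hsq : ∀ u v : ℝ, (a * u + b * v) ^ 2 ≤ a * u ^ 2 + b * v ^ 2 := fun u v => by
    have : a * u ^ 2 + b * v ^ 2 - (a * u + b * v) ^ 2 = a * b * (u - v) ^ 2 := by
      linear_combination (-(a * u ^ 2 + b * v ^ 2)) * hab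
    nlinarith [mul_nonneg (mul_nonneg ha hb) (sq_nonneg (u - v))]
  have hsum : ∑ j, (a * x.2 j + b * x'.2 j) ^ 2 ≤ a * ∑ j, x.2 j ^ 2 + b * ∑ j, x'.2 j ^ 2 := by
    simp only [Finset.mul_sum, ← Finset.sum_add_distrib]
    gcongr with j _
    exact hsq _ _
  simp only [msvmF, Prod.snd_add, Prod.smul_snd, Pi.add_apply, Pi.smul_apply, smul_eq_mul]
  nlinarith [mul_le_mul_of_nonneg_left hsum (by positivity : (0 : ℝ) ≤ lam3 / 2)]

theorem convex_msvmFeasible : Convex ℝ (msvmFeasible (p := p) (J := J)) := by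
  intro x hx x' hx' a b _ _ _
  refine ⟨fun g => ?_, ?_⟩
  · simp [Finset.sum_add_distrib, ← Finset.mul_sum, hx.1 g, hx'.1 g]
  · simp [Finset.sum_add_distrib, ← Finset.mul_sum, hx.2, hx'.2]

theorem msvm_isLagrangianSaddle (hα : 0 < α) (hμ : 0 < μ) (hν : 0 < ν)
    {Ws : Matrix (Fin p) (Fin J) ℝ} {bs : Fin J → ℝ} {As Pis : Matrix (Fin n) (Fin J) ℝ}
    {Us Vs Lams Gams : Matrix (Fin p) (Fin J) ℝ} (hfeas : (Ws, bs) ∈ msvmFeasible)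
    (hAs : As = msvmAffine X Ws bs) (hUs : Us = Ws) (hVs : Vs = Ws)
    (hsad : ∀ W b A U V, (W, b) ∈ msvmFeasible →
      msvmLagrangian X y rnrm lam1 lam2 lam3 Ws bs As Us Vs Pis Lams Gams ≤
        msvmLagrangian X y rnrm lam1 lam2 lam3 W b A U V Pis Lams Gams) :
    IsLagrangianSaddle msvmFeasible (msvmF lam3) (msvmG y rnrm lam1 lam2 α μ ν)
      (msvmMap X α μ ν) (Ws, bs) (msvmPrimal α μ ν As Us Vs) (msvmDual α μ ν Pis Lams Gams) := by
  have hfeasible : msvmMap X α μ ν (Ws, bs) = msvmPrimal α μ ν As Us Vs := by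
    rw [msvmMap_apply, hAs, hUs, hVs]
  refine ⟨hfeas, hfeasible, fun ⟨W, b⟩ hx z => ?_⟩
  set t := weightedUnstack (√α)⁻¹ (√μ)⁻¹ (√ν)⁻¹ z
  have h := hsad W b t.1 t.2.1 t.2.2 hx
  rw [msvmLagrangian_eq hα hμ hν, msvmLagrangian_eq hα hμ hν, msvmPrimal_weightedUnstack hα hμ hν,
    hfeasible, sub_self, inner_zero_right, add_zero] at h
  exact h

theorem msvm_isADMMSeq (hα : 0 < α) (hμ : 0 < μ) (hν : 0 < ν)
    {W : ℕ → Matrix (Fin p) (Fin J) ℝ} {b : ℕ → Fin J → ℝ} {A P : ℕ → Matrix (Fin n) (Fin J) ℝ}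
    {U V L Γ : ℕ → Matrix (Fin p) (Fin J) ℝ}
    (hx : ∀ k, (W (k + 1), b (k + 1)) ∈ msvmFeasible ∧ ∀ W' b', (W', b') ∈ msvmFeasible →
      msvmAugLagrangian X y rnrm lam1 lam2 lam3 α μ ν (W (k + 1)) (b (k + 1)) (A k) (U k) (V k)
          (P k) (L k) (Γ k) ≤
        msvmAugLagrangian X y rnrm lam1 lam2 lam3 α μ ν W' b' (A k) (U k) (V k) (P k) (L k) (Γ k))
    (hz : ∀ k A' U' V',
      msvmAugLagrangian X y rnrm lam1 lam2 lam3 α μ ν (W (k + 1)) (b (k + 1)) (A (k + 1))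
          (U (k + 1)) (V (k + 1)) (P k) (L k) (Γ k) ≤
        msvmAugLagrangian X y rnrm lam1 lam2 lam3 α μ ν (W (k + 1)) (b (k + 1)) A' U' V'
          (P k) (L k) (Γ k))
    (hP : ∀ k, P (k + 1) = Matrix.of fun i j =>
      P k i j + α * (msvmAffine X (W (k + 1)) (b (k + 1)) i j - A (k + 1) i j))
    (hL : ∀ k, L (k + 1) = Matrix.of fun g j => L k g j + μ * (W (k + 1) g j - U (k + 1) g j))
    (hΓ : ∀ k, Γ (k + 1) = Matrix.of fun g j => Γ k g j + ν * (W (k + 1) g j - V (k + 1) g j)) :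
    IsADMMSeq msvmFeasible (msvmF lam3) (msvmG y rnrm lam1 lam2 α μ ν) (msvmMap X α μ ν)
      (fun k => (W k, b k)) (fun k => msvmPrimal α μ ν (A k) (U k) (V k))
      (fun k => msvmDual α μ ν (P k) (L k) (Γ k)) where
  mem k := (hx k).1
  isMinOn_x k := isMinOn_iff.2 fun ⟨W', b'⟩ hx' => by
    rw [← msvmAugLagrangian_eq hα hμ hν, ← msvmAugLagrangian_eq hα hμ hν]
    exact (hx k).2 W' b' hx'
  isMinOn_z k := isMinOn_univ_iff.2 fun z => by
    set t := weightedUnstack (√α)⁻¹ (√μ)⁻¹ (√ν)⁻¹ z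
    rw [← msvmPrimal_weightedUnstack hα hμ hν z, ← msvmAugLagrangian_eq hα hμ hν,
      ← msvmAugLagrangian_eq hα hμ hν]
    exact hz k t.1 t.2.1 t.2.2
  dual_update k := by
    rw [hP k, hL k, hΓ k, msvmDual_update hα hμ hν]

theorem msvm_residuals_tendsto (hα : 0 < α) (hμ : 0 < μ) (hν : 0 < ν)
    {W : ℕ → Matrix (Fin p) (Fin J) ℝ} {b : ℕ → Fin J → ℝ} {A : ℕ → Matrix (Fin n) (Fin J) ℝ}
    {U V : ℕ → Matrix (Fin p) (Fin J) ℝ}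
    (h : Tendsto (fun k => ‖msvmMap X α μ ν (W k, b k) - msvmPrimal α μ ν (A k) (U k) (V k)‖)
      atTop (𝓝 0)) :
    Tendsto (fun k => √(∑ i, ∑ j, (msvmAffine X (W k) (b k) i j - A k i j) ^ 2)) atTop (𝓝 0) ∧
      Tendsto (fun k => √(∑ g, ∑ j, (W k g j - U k g j) ^ 2)) atTop (𝓝 0) ∧
      Tendsto (fun k => √(∑ g, ∑ j, (W k g j - V k g j) ^ 2)) atTop (𝓝 0) := by
  have hnorm := fun k => norm_msvmPrimal_sub_sq hα.le hμ.le hν.le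
    (msvmAffine X (W k) (b k)) (A k) (W k) (U k) (W k) (V k)
  simp only [← msvmMap_apply] at hnorm
  refine ⟨tendsto_sqrt_zero_of_mul_le hα (fun _ => by positivity) (fun k => ?_) h,
    tendsto_sqrt_zero_of_mul_le hμ (fun _ => by positivity) (fun k => ?_) h,
    tendsto_sqrt_zero_of_mul_le hν (fun _ => by positivity) (fun k => ?_) h⟩ <;>
  · rw [hnorm k]
    have : 0 ≤ α * ∑ i, ∑ j, (msvmAffine X (W k) (b k) i j - A k i j) ^ 2 := by positivity
    have : 0 ≤ μ * ∑ g, ∑ j, (W k g j - U k g j) ^ 2 := by positivity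
    have : 0 ≤ ν * ∑ g, ∑ j, (W k g j - V k g j) ^ 2 := by positivity
    linarith

end MSVMLemmas

/-- Convergence of the two-block ADMM (13) for the ℓ_q-row-norm (q = 2 or ∞) splitting:
if the split problem has a saddle point of its Lagrangian, then along the ADMM iterates
the objective `F₂` converges to the optimal value `F₂*` and the residuals
`‖XᵀW^k + e(b^k)ᵀ + E − A^k‖_F`, `‖W^k − U^k‖_F`, `‖W^k − V^k‖_F` converge to zero. -/
theorem stmt_15 (n p J : ℕ) (X : Matrix (Fin p) (Fin n) ℝ) (y : Fin n → Fin J)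
    (rnrm : (Fin J → ℝ) → ℝ)
    (hq : (∀ v : Fin J → ℝ, rnrm v = Real.sqrt (∑ j, (v j) ^ 2)) ∨
          (∀ v : Fin J → ℝ, rnrm v = ⨆ j, |v j|))
    (lam1 lam2 lam3 : ℝ) (hlam1 : 0 ≤ lam1) (hlam2 : 0 ≤ lam2) (hlam3 : 0 < lam3)
    (α μ ν : ℝ) (hα : 0 < α) (hμ : 0 < μ) (hν : 0 < ν)
    (Wseq : ℕ → Matrix (Fin p) (Fin J) ℝ) (bseq : ℕ → Fin J → ℝ)
    (Aseq : ℕ → Matrix (Fin n) (Fin J) ℝ) (Useq Vseq : ℕ → Matrix (Fin p) (Fin J) ℝ)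
    (Piseq : ℕ → Matrix (Fin n) (Fin J) ℝ) (Lamseq Gamseq : ℕ → Matrix (Fin p) (Fin J) ℝ)
    (Ws : Matrix (Fin p) (Fin J) ℝ) (bs : Fin J → ℝ)
    (As : Matrix (Fin n) (Fin J) ℝ) (Us Vs : Matrix (Fin p) (Fin J) ℝ)
    (Pis : Matrix (Fin n) (Fin J) ℝ) (Lams Gams : Matrix (Fin p) (Fin J) ℝ)
    (F2star : ℝ) :
    let c : Fin n → Fin J → ℝ := fun i j => if y i ≠ j then 1 else 0
    let feas : Matrix (Fin p) (Fin J) ℝ → (Fin J → ℝ) → Prop := fun W b =>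
      (∀ g, ∑ j, W g j = 0) ∧ (∑ j, b j = 0)
    let Amap : Matrix (Fin p) (Fin J) ℝ → (Fin J → ℝ) → Matrix (Fin n) (Fin J) ℝ :=
      fun W b => Matrix.of fun i j => (∑ g, X g i * W g j) + b j + 1
    let F2 : Matrix (Fin p) (Fin J) ℝ → (Fin J → ℝ) → Matrix (Fin n) (Fin J) ℝ →
        Matrix (Fin p) (Fin J) ℝ → Matrix (Fin p) (Fin J) ℝ → ℝ := fun W b A U V =>
      (1 / (n : ℝ)) * (∑ i, ∑ j, c i j * max (A i j) 0) + lam1 * (∑ g, ∑ j, |U g j|)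
        + lam2 * (∑ g, rnrm (fun j => V g j)) + lam3 / 2 * ∑ j, (b j) ^ 2
    let L0 : Matrix (Fin p) (Fin J) ℝ → (Fin J → ℝ) → Matrix (Fin n) (Fin J) ℝ →
        Matrix (Fin p) (Fin J) ℝ → Matrix (Fin p) (Fin J) ℝ →
        Matrix (Fin n) (Fin J) ℝ → Matrix (Fin p) (Fin J) ℝ →
        Matrix (Fin p) (Fin J) ℝ → ℝ := fun W b A U V Pv Lv Gv =>
      F2 W b A U V + (∑ i, ∑ j, Pv i j * (Amap W b i j - A i j))
        + (∑ g, ∑ j, Lv g j * (W g j - U g j))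
        + (∑ g, ∑ j, Gv g j * (W g j - V g j))
    let L2 : Matrix (Fin p) (Fin J) ℝ → (Fin J → ℝ) → Matrix (Fin n) (Fin J) ℝ →
        Matrix (Fin p) (Fin J) ℝ → Matrix (Fin p) (Fin J) ℝ →
        Matrix (Fin n) (Fin J) ℝ → Matrix (Fin p) (Fin J) ℝ →
        Matrix (Fin p) (Fin J) ℝ → ℝ := fun W b A U V Pv Lv Gv =>
      L0 W b A U V Pv Lv Gv + α / 2 * (∑ i, ∑ j, (Amap W b i j - A i j) ^ 2)
        + μ / 2 * (∑ g, ∑ j, (W g j - U g j) ^ 2)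
        + ν / 2 * (∑ g, ∑ j, (W g j - V g j) ^ 2)
    -- saddle point of the (unaugmented) Lagrangian, with optimal value F₂*
    feas Ws bs → As = Amap Ws bs → Us = Ws → Vs = Ws →
    F2star = F2 Ws bs As Us Vs →
    (∀ Pv Lv Gv, L0 Ws bs As Us Vs Pv Lv Gv ≤ L0 Ws bs As Us Vs Pis Lams Gams) →
    (∀ W b A U V, feas W b →
      L0 Ws bs As Us Vs Pis Lams Gams ≤ L0 W b A U V Pis Lams Gams) →
    -- ADMM updates (13a)-(13e)
    (∀ k, feas (Wseq (k + 1)) (bseq (k + 1)) ∧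
      ∀ W b, feas W b →
        L2 (Wseq (k + 1)) (bseq (k + 1)) (Aseq k) (Useq k) (Vseq k)
            (Piseq k) (Lamseq k) (Gamseq k)
          ≤ L2 W b (Aseq k) (Useq k) (Vseq k) (Piseq k) (Lamseq k) (Gamseq k)) →
    (∀ k A U V,
      L2 (Wseq (k + 1)) (bseq (k + 1)) (Aseq (k + 1)) (Useq (k + 1)) (Vseq (k + 1))
          (Piseq k) (Lamseq k) (Gamseq k)
        ≤ L2 (Wseq (k + 1)) (bseq (k + 1)) A U V (Piseq k) (Lamseq k) (Gamseq k)) →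
    (∀ k, Piseq (k + 1) = Matrix.of fun i j =>
      Piseq k i j + α * (Amap (Wseq (k + 1)) (bseq (k + 1)) i j - Aseq (k + 1) i j)) →
    (∀ k, Lamseq (k + 1) = Matrix.of fun g j =>
      Lamseq k g j + μ * (Wseq (k + 1) g j - Useq (k + 1) g j)) →
    (∀ k, Gamseq (k + 1) = Matrix.of fun g j =>
      Gamseq k g j + ν * (Wseq (k + 1) g j - Vseq (k + 1) g j)) →
    -- conclusions
    (Tendsto (fun k => F2 (Wseq k) (bseq k) (Aseq k) (Useq k) (Vseq k))
        atTop (nhds F2star) ∧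
     Tendsto (fun k =>
        Real.sqrt (∑ i, ∑ j, (Amap (Wseq k) (bseq k) i j - Aseq k i j) ^ 2))
       atTop (nhds 0) ∧
     Tendsto (fun k => Real.sqrt (∑ g, ∑ j, (Wseq k g j - Useq k g j) ^ 2))
       atTop (nhds 0) ∧
     Tendsto (fun k => Real.sqrt (∑ g, ∑ j, (Wseq k g j - Vseq k g j) ^ 2))
       atTop (nhds 0)) := by
  intro c feas Amap F2 L0 L2 hfeas hAs hUs hVs hF2 _ hsad hxstep hzstep hPi hLam hGam
  have hs := msvm_isLagrangianSaddle (X := X) (y := y) (rnrm := rnrm) (lam1 := lam1)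
    (lam2 := lam2) (lam3 := lam3) hα hμ hν hfeas hAs hUs hVs hsad
  have h := msvm_isADMMSeq (X := X) (y := y) (rnrm := rnrm) (lam1 := lam1) (lam2 := lam2)
    (lam3 := lam3) hα hμ hν hxstep hzstep hPi hLam hGam
  obtain ⟨hobj, hres⟩ := h.tendsto hs
    ((convexOn_msvmF hlam3.le).subset (subset_univ _) convex_msvmFeasible)
    (convexOn_msvmG (convexOn_rnrm hq) hlam1 hlam2)
  refine ⟨?_, msvm_residuals_tendsto hα hμ hν hres⟩
  simp only [msvmF_add_msvmG hα hμ hν] at hobj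
  rw [hF2]
  exact hobj
end
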